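/- arXiv:1107.0893 — 5 statements merged into one kernel-verified Lean document; each statement's English description precedes it below -/
import Mathlib

section
/- For any function φ : ℕ → {+,−} and any a ∈ ℂ, the φ-Verma module M_φ(a) is an irreducible L-module (i.e., its only L-submodules are 0 and M_φ(a)) if and only if a ≠ 0. -/
/-!
STATEMENT 1: For any function φ : ℕ → {+,−} and any a ∈ ℂ, the φ-Verma module M_φ(a)
is an irreducible L-module iff a ≠ 0.
We model the sign set {+,−} by `Bool`, with `true` standing for `+`.
`ℕ` in the paper means positive integers, so conditions carry `1 ≤ ·`.
-/

open UniversalEnvelopingAlgebra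

/-- The Heisenberg Lie algebra `L` with basis `{c} ∪ {x_{k,i} : k ∈ ℤ∖{0}, 1 ≤ i ≤ d |k|}`,
`c` central, and `[x_{k,i}, x_{l,j}] = δ_{k,-l} δ_{i,j} k c`. -/
structure HeisenbergL (d : ℕ → ℕ) (L : Type) [LieRing L] [LieAlgebra ℂ L] : Type where
  c : L
  x : ℤ → ℕ → L
  basis : Module.Basis (Option {p : ℤ × ℕ // p.1 ≠ 0 ∧ 1 ≤ p.2 ∧ p.2 ≤ d p.1.natAbs}) ℂ L
  basis_none : basis none = c
  basis_some : ∀ p, basis (some p) = x p.1.1 p.1.2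
  lie_c : ∀ y : L, ⁅c, y⁆ = 0
  lie_x_x : ∀ k l i j, k ≠ 0 → l ≠ 0 → 1 ≤ i → i ≤ d k.natAbs → 1 ≤ j → j ≤ d l.natAbs →
    ⁅x k i, x l j⁆ = if k = -l ∧ i = j then (k : ℂ) • c else 0

/-- The index set of the basis vectors `x_{k,i}` spanning `L_φ^+`:
`x_{k,i}` with `k > 0` and `φ k = +`, together with `x_{-k,i}` with `k > 0` and `φ k = -`. -/
def posIdx (d : ℕ → ℕ) (φ : ℕ → Bool) : Set (ℤ × ℕ) :=
  {p | p.1 ≠ 0 ∧ 1 ≤ p.2 ∧ p.2 ≤ d p.1.natAbs ∧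
    ((0 < p.1 ∧ φ p.1.natAbs = true) ∨ (p.1 < 0 ∧ φ p.1.natAbs = false))}

variable {d : ℕ → ℕ} {L : Type} [LieRing L] [LieAlgebra ℂ L]

/-- The left ideal of `U(L)` by which one quotients to obtain the induced module
`M_φ(a) = U(L) ⊗_{U(ℂc ⊕ L_φ^+)} ℂv`: it is generated by `c - a·1` and `L_φ^+`. -/
def vermaIdeal (E : HeisenbergL d L) (φ : ℕ → Bool) (a : ℂ) :
    Submodule (UniversalEnvelopingAlgebra ℂ L) (UniversalEnvelopingAlgebra ℂ L) :=
  Submodule.span (UniversalEnvelopingAlgebra ℂ L)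
    ({ι ℂ E.c - algebraMap ℂ (UniversalEnvelopingAlgebra ℂ L) a} ∪
      ((fun p : ℤ × ℕ => ι ℂ (E.x p.1 p.2)) '' posIdx d φ))

/-- The φ-Verma module `M_φ(a)`, realized as `U(L)/U(L)·⟨c - a, L_φ^+⟩`. -/
def VermaMod (E : HeisenbergL d L) (φ : ℕ → Bool) (a : ℂ) :=
  UniversalEnvelopingAlgebra ℂ L ⧸ vermaIdeal E φ a

instance (E : HeisenbergL d L) (φ : ℕ → Bool) (a : ℂ) : AddCommGroup (VermaMod E φ a) :=
  inferInstanceAs (AddCommGroup (UniversalEnvelopingAlgebra ℂ L ⧸ vermaIdeal E φ a))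

instance (E : HeisenbergL d L) (φ : ℕ → Bool) (a : ℂ) :
    Module (UniversalEnvelopingAlgebra ℂ L) (VermaMod E φ a) :=
  inferInstanceAs (Module (UniversalEnvelopingAlgebra ℂ L)
    (UniversalEnvelopingAlgebra ℂ L ⧸ vermaIdeal E φ a))

/-!
Realize `L` on the Fock space `ℂ[x_j : x_j ∈ L_φ^-]`: `L_φ^-` acts by multiplication,
`x_{k,i} ∈ L_φ^+` by `k · a · ∂/∂x_{-k,i}`, and `c` by `a`. The vacuum `1` is killed by `c - a` and
by `L_φ^+`, and commuting `L_φ^+` past monomials in `L_φ^-` shows `U(L) = I + ℂ[L_φ^-]`, where `I`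
is the left ideal defining `M_φ(a)`. Hence `u ∈ I` iff `u · 1 = 0`: `M_φ(a)` is the Fock space.
For `a ≠ 0` every `∂/∂x_j` is the action of an element of `U(L)`, and these operators bring any
nonzero polynomial down to a nonzero constant, so every left ideal `J ⊋ I` contains `1`. For
`a = 0` the kernel of the augmentation `U(L) → ℂ` contains `I` and also `x_j ∈ L_φ^-`, which acts
nontrivially on the vacuum, so it lies strictly between `I` and `U(L)`.
-/

attribute [local instance] LieRing.ofAssociativeRing

open MvPolynomial

namespace MvPolynomial

variable {σ R : Type*} [CommSemiring R]

theorem pderiv_pderiv_comm (i j : σ) (p : MvPolynomial σ R) :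
    pderiv i (pderiv j p) = pderiv j (pderiv i p) := by
  classical
  induction p using MvPolynomial.induction_on' with
  | add p q hp hq => simp [hp, hq]
  | monomial s c =>
    simp only [pderiv_monomial]
    rcases eq_or_ne i j with rfl | hij
    · rfl
    · congr 1
      · rw [tsub_tsub, tsub_tsub, add_comm]
      · simp [Finsupp.single_eq_of_ne hij, Finsupp.single_eq_of_ne hij.symm, mul_right_comm]

theorem commute_pderiv (i j : σ) :
    Commute ((pderiv i).toLinearMap : Module.End R (MvPolynomial σ R)) (pderiv j).toLinearMap :=
  LinearMap.ext (pderiv_pderiv_comm i j)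

theorem commute_mulLeft_X (i j : σ) :
    Commute (LinearMap.mulLeft R (X i : MvPolynomial σ R)) (LinearMap.mulLeft R (X j)) :=
  LinearMap.ext fun p => by simp only [Module.End.mul_apply, LinearMap.mulLeft_apply]; ring

theorem totalDegree_pderiv_lt {i : σ} {p : MvPolynomial σ R} (h : pderiv i p ≠ 0) :
    (pderiv i p).totalDegree < p.totalDegree := by
  obtain ⟨m, hm, hdeg⟩ := Finset.exists_mem_eq_sup _ (support_nonempty.mpr h)
    (fun s : σ →₀ ℕ => s.sum fun _ e => e)
  have hm' : m + Finsupp.single i 1 ∈ p.support := by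
    rw [mem_support_iff, coeff_pderiv] at hm
    exact mem_support_iff.mpr (left_ne_zero_of_mul hm)
  have := le_totalDegree hm'
  rw [Finsupp.sum_add_index' (fun _ => rfl) (fun _ _ _ => rfl), Finsupp.sum_single_index rfl]
    at this
  rw [totalDegree, hdeg]
  omega

theorem eq_C_of_forall_pderiv_eq_zero [NoZeroDivisors R] [CharZero R] {p : MvPolynomial σ R}
    (h : ∀ i, pderiv i p = 0) : p = C (p.coeff 0) := by
  classical
  ext m
  rw [coeff_C]
  split_ifs with hm
  · rw [hm]
  obtain ⟨i, hi⟩ := Finsupp.support_nonempty_iff.mpr (Ne.symm hm)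
  have hmi : m - Finsupp.single i 1 + Finsupp.single i 1 = m :=
    tsub_add_cancel_of_le (Finsupp.single_le_iff.mpr (Nat.one_le_iff_ne_zero.mpr
      (Finsupp.mem_support_iff.mp hi)))
  have := coeff_pderiv (i := i) p (m - Finsupp.single i 1)
  rw [h i, coeff_zero, hmi] at this
  exact (mul_eq_zero.mp this.symm).resolve_right (Nat.cast_add_one_ne_zero _)

theorem one_mem_of_pderiv_mem {K : Type*} [Field K] [CharZero K]
    {S : Submodule K (MvPolynomial σ K)} (hS : ∀ i, ∀ p ∈ S, pderiv i p ∈ S)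
    {p : MvPolynomial σ K} (hp : p ∈ S) (hp0 : p ≠ 0) : (1 : MvPolynomial σ K) ∈ S := by
  induction hn : p.totalDegree using Nat.strong_induction_on generalizing p with
  | _ n ih =>
  by_cases h : ∀ i, pderiv i p = 0
  · set c := p.coeff 0
    have hpc : p = C c := eq_C_of_forall_pderiv_eq_zero h
    have hc : c ≠ 0 := fun h0 => hp0 (by rw [hpc, h0, C_0])
    have h1 : (1 : MvPolynomial σ K) = c⁻¹ • p := by
      rw [smul_eq_C_mul, hpc, ← C_mul, inv_mul_cancel₀ hc, C_1]
    exact h1 ▸ S.smul_mem c⁻¹ hp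
  · obtain ⟨i, hi⟩ := not_forall.mp h
    exact ih _ (hn ▸ totalDegree_pderiv_lt hi) (hS i p hp) hi rfl

section NoncommEval

variable {A : Type*} [Semiring A] [Algebra R A]

open scoped IsMulCommutative in
noncomputable def aevalOfCommute (f : σ → A) (hf : ∀ i j, Commute (f i) (f j)) :
    MvPolynomial σ R →ₐ[R] A :=
  haveI := Algebra.isMulCommutative_adjoin R (s := Set.range f) (by
    rintro _ ⟨i, rfl⟩ _ ⟨j, rfl⟩
    exact (hf i j).eq)
  (Algebra.adjoin R (Set.range f)).val.comp
    (aeval fun i => ⟨f i, Algebra.subset_adjoin ⟨i, rfl⟩⟩)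

open scoped IsMulCommutative in
theorem aevalOfCommute_X (f : σ → A) (hf : ∀ i j, Commute (f i) (f j)) (i : σ) :
    aevalOfCommute (R := R) f hf (X i) = f i :=
  haveI := Algebra.isMulCommutative_adjoin R (s := Set.range f) (by
    rintro _ ⟨i, rfl⟩ _ ⟨j, rfl⟩
    exact (hf i j).eq)
  congrArg Subtype.val (aeval_X _ i)

/-- Both sides are derivations along `τ` in `q`, so it suffices to compare them on variables. -/
theorem mul_algHom_eq_of_X (τ : MvPolynomial σ R →ₐ[R] A) {y z : A} (i : σ)
    (hz : ∀ q, Commute z (τ q))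
    (hX : ∀ j, y * τ (X j) = τ (X j) * y + z * τ (pderiv i (X j))) (q : MvPolynomial σ R) :
    y * τ q = τ q * y + z * τ (pderiv i q) := by
  induction q using MvPolynomial.induction_on with
  | C r => simp [Algebra.commutes]
  | add f g hf hg => simp only [map_add, mul_add, add_mul, hf, hg]; abel
  | mul_X q j ih =>
    rw [pderiv_mul, map_add, map_mul, map_mul, map_mul, ← mul_assoc, ih, add_mul, mul_assoc,
      hX, mul_add, ← (hz q).left_comm]
    simp only [mul_add, mul_assoc]
    abel

end NoncommEval

end MvPolynomial

namespace UniversalEnvelopingAlgebra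

variable (R L : Type*) [CommRing R] [LieRing L] [LieAlgebra R L]

noncomputable def counit : UniversalEnvelopingAlgebra R L →ₐ[R] R := lift R 0

variable {R L}

@[simp]
theorem counit_ι (x : L) : counit R L (ι R x) = 0 := by
  rw [counit, lift_ι_apply]
  rfl

theorem ι_lie (x y : L) : ι R ⁅x, y⁆ = ι R x * ι R y - ι R y * ι R x :=
  (ι R).map_lie x y

@[elab_as_elim]
theorem induction {C : UniversalEnvelopingAlgebra R L → Prop}
    (algebraMap : ∀ r, C (algebraMap R (UniversalEnvelopingAlgebra R L) r))
    (ι : ∀ x, C (ι R x)) (mul : ∀ u v, C u → C v → C (u * v))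
    (add : ∀ u v, C u → C v → C (u + v)) (u : UniversalEnvelopingAlgebra R L) : C u := by
  obtain ⟨t, rfl⟩ := (RingCon.mkₐ_surjective _ : Function.Surjective (mkAlgHom R L)) u
  induction t using TensorAlgebra.induction with
  | algebraMap r =>
    rw [AlgHom.commutes]
    exact algebraMap r
  | ι x => exact ι x
  | mul s t hs ht => exact (map_mul (mkAlgHom R L) s t).symm ▸ mul _ _ hs ht
  | add s t hs ht => exact (map_add (mkAlgHom R L) s t).symm ▸ add _ _ hs ht

end UniversalEnvelopingAlgebra

/-- `x_p` pairs nontrivially only with `x_(partner p)`. -/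
def partner (p : ℤ × ℕ) : ℤ × ℕ := (-p.1, p.2)

@[simp]
theorem partner_partner (p : ℤ × ℕ) : partner (partner p) = p := by simp [partner]

theorem eq_partner_iff {p q : ℤ × ℕ} : p = partner q ↔ p.1 = -q.1 ∧ p.2 = q.2 := Prod.ext_iff

def basisIdx (d : ℕ → ℕ) : Set (ℤ × ℕ) := {p | p.1 ≠ 0 ∧ 1 ≤ p.2 ∧ p.2 ≤ d p.1.natAbs}

/-- The indices of the basis vectors spanning `L_φ^-`. -/
def negIdx (d : ℕ → ℕ) (φ : ℕ → Bool) : Set (ℤ × ℕ) := partner ⁻¹' posIdx d φ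

section Indices

variable {φ : ℕ → Bool} {p : ℤ × ℕ}

theorem partner_mem_basisIdx (hp : p ∈ basisIdx d) : partner p ∈ basisIdx d := by
  simpa [partner, basisIdx] using hp

theorem posIdx_subset_basisIdx : posIdx d φ ⊆ basisIdx d := fun _ hp => ⟨hp.1, hp.2.1, hp.2.2.1⟩

theorem negIdx_subset_basisIdx : negIdx d φ ⊆ basisIdx d := fun p hp => by
  simpa using partner_mem_basisIdx (posIdx_subset_basisIdx hp)

theorem partner_mem_negIdx (hp : p ∈ posIdx d φ) : partner p ∈ negIdx d φ := by
  simpa [negIdx] using hp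

theorem notMem_negIdx_of_mem_posIdx (hp : p ∈ posIdx d φ) : p ∉ negIdx d φ := by
  rintro ⟨-, -, -, hn⟩
  rcases hp.2.2.2 with ⟨hk, hb⟩ | ⟨hk, hb⟩ <;> rcases hn with ⟨hk', hb'⟩ | ⟨hk', hb'⟩ <;>
    simp_all [partner] <;> omega

theorem mem_posIdx_or_mem_negIdx (hp : p ∈ basisIdx d) : p ∈ posIdx d φ ∨ p ∈ negIdx d φ := by
  obtain ⟨h0, h1, h2⟩ := hp
  rcases lt_or_gt_of_ne h0 with hk | hk <;> cases h : φ p.1.natAbs <;>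
    simp [posIdx, negIdx, partner, h0, h1, h2, hk, h]

theorem negIdx_nonempty (hd : 1 ≤ d 1) : (negIdx d φ).Nonempty := by
  cases h : φ 1
  · exact ⟨(1, 1), by simp [negIdx, posIdx, partner, h, hd]⟩
  · exact ⟨(-1, 1), by simp [negIdx, posIdx, partner, h, hd]⟩

end Indices

abbrev Fock (d : ℕ → ℕ) (φ : ℕ → Bool) := MvPolynomial (negIdx d φ) ℂ

namespace HeisenbergL

section Relations

variable (E : HeisenbergL d L)

def gen (p : ℤ × ℕ) : L := E.x p.1 p.2

theorem basis_some_eq_gen {p : ℤ × ℕ} (hp : p ∈ basisIdx d) :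
    E.basis (some ⟨p, hp⟩) = E.gen p :=
  E.basis_some _

theorem lie_gen_gen {p q : ℤ × ℕ} (hp : p ∈ basisIdx d) (hq : q ∈ basisIdx d) :
    ⁅E.gen p, E.gen q⁆ = if p = partner q then (p.1 : ℂ) • E.c else 0 := by
  simp only [gen, eq_partner_iff]
  exact E.lie_x_x _ _ _ _ hp.1 hq.1 hp.2.1 hp.2.2 hq.2.1 hq.2.2

theorem commute_ι_c (u : UniversalEnvelopingAlgebra ℂ L) : Commute (ι ℂ E.c) u := by
  induction u using UniversalEnvelopingAlgebra.induction with
  | algebraMap r => exact (Algebra.commutes r _).symm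
  | ι x => rw [commute_iff_eq, ← sub_eq_zero, ← ι_lie, E.lie_c, map_zero]
  | mul u v hu hv => exact hu.mul_right hv
  | add u v hu hv => exact hu.add_right hv

theorem ι_gen_mul_ι_gen {p q : ℤ × ℕ} (hp : p ∈ basisIdx d) (hq : q ∈ basisIdx d) :
    ι ℂ (E.gen p) * ι ℂ (E.gen q) =
      ι ℂ (E.gen q) * ι ℂ (E.gen p) + if p = partner q then (p.1 : ℂ) • ι ℂ E.c else 0 := by
  rw [← sub_eq_iff_eq_add', ← ι_lie, E.lie_gen_gen hp hq]
  split_ifs <;> simp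

theorem commute_ι_gen {p q : ℤ × ℕ} (hp : p ∈ basisIdx d) (hq : q ∈ basisIdx d)
    (h : p ≠ partner q) : Commute (ι ℂ (E.gen p)) (ι ℂ (E.gen q)) := by
  simpa [Commute, SemiconjBy, h] using E.ι_gen_mul_ι_gen hp hq

end Relations

section FockRepresentation

variable (E : HeisenbergL d L) (φ : ℕ → Bool) (a : ℂ)

open Classical in
noncomputable def fockLin : L →ₗ[ℂ] Module.End ℂ (Fock d φ) :=
  E.basis.constr ℂ fun o => o.elim (a • 1) fun p =>
    if h : p.1 ∈ posIdx d φ then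
      ((p.1.1 : ℂ) * a) • (pderiv (⟨partner p.1, partner_mem_negIdx h⟩ : negIdx d φ)).toLinearMap
    else LinearMap.mulLeft ℂ (X ⟨p.1, (mem_posIdx_or_mem_negIdx p.2).resolve_left h⟩)

variable {φ a}

theorem fockLin_c : E.fockLin φ a E.c = a • 1 := by
  rw [← E.basis_none, fockLin, Module.Basis.constr_basis]
  rfl

theorem fockLin_gen_of_mem_posIdx {p : ℤ × ℕ} (hp : p ∈ posIdx d φ) :
    E.fockLin φ a (E.gen p) =
      ((p.1 : ℂ) * a) • ((pderiv ⟨partner p, partner_mem_negIdx hp⟩).toLinearMap :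
        Module.End ℂ (Fock d φ)) := by
  rw [← E.basis_some_eq_gen (posIdx_subset_basisIdx hp), fockLin, Module.Basis.constr_basis]
  exact dif_pos hp

theorem fockLin_gen_of_mem_negIdx {p : ℤ × ℕ} (hp : p ∈ negIdx d φ) :
    E.fockLin φ a (E.gen p) = LinearMap.mulLeft ℂ (X ⟨p, hp⟩) := by
  rw [← E.basis_some_eq_gen (negIdx_subset_basisIdx hp), fockLin, Module.Basis.constr_basis]
  exact dif_neg (fun h => notMem_negIdx_of_mem_posIdx h hp)

theorem fockLin_lie_c (x : L) :
    E.fockLin φ a ⁅E.c, x⁆ = ⁅E.fockLin φ a E.c, E.fockLin φ a x⁆ := by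
  rw [E.lie_c, map_zero, fockLin_c, Ring.lie_def, eq_comm, sub_eq_zero]
  exact ((Commute.one_left _).smul_left a).eq

theorem fockLin_lie_gen_of_mem_posIdx_of_mem_negIdx {p q : ℤ × ℕ} (hp : p ∈ posIdx d φ)
    (hq : q ∈ negIdx d φ) :
    E.fockLin φ a ⁅E.gen p, E.gen q⁆ = ⁅E.fockLin φ a (E.gen p), E.fockLin φ a (E.gen q)⁆ := by
  rw [E.lie_gen_gen (posIdx_subset_basisIdx hp) (negIdx_subset_basisIdx hq),
    fockLin_gen_of_mem_posIdx _ hp, fockLin_gen_of_mem_negIdx _ hq, Ring.lie_def]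
  refine LinearMap.ext fun f => ?_
  by_cases h : p = partner q
  · subst h
    simp [fockLin_c, smul_smul]
  · have h' : (⟨q, hq⟩ : negIdx d φ) ≠ ⟨partner p, partner_mem_negIdx hp⟩ := by
      rintro ⟨⟩
      simp at h
    simp [h, pderiv_X_of_ne h']

theorem fockLin_lie_gen_of_mem_posIdx {p q : ℤ × ℕ} (hp : p ∈ posIdx d φ)
    (hq : q ∈ posIdx d φ) :
    E.fockLin φ a ⁅E.gen p, E.gen q⁆ = ⁅E.fockLin φ a (E.gen p), E.fockLin φ a (E.gen q)⁆ := by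
  have h : p ≠ partner q := fun h => notMem_negIdx_of_mem_posIdx hp (h ▸ partner_mem_negIdx hq)
  rw [E.lie_gen_gen (posIdx_subset_basisIdx hp) (posIdx_subset_basisIdx hq), if_neg h, map_zero,
    fockLin_gen_of_mem_posIdx _ hp, fockLin_gen_of_mem_posIdx _ hq, Ring.lie_def, eq_comm,
    sub_eq_zero]
  exact (((commute_pderiv _ _).smul_left _).smul_right _).eq

theorem fockLin_lie_gen_of_mem_negIdx {p q : ℤ × ℕ} (hp : p ∈ negIdx d φ)
    (hq : q ∈ negIdx d φ) :
    E.fockLin φ a ⁅E.gen p, E.gen q⁆ = ⁅E.fockLin φ a (E.gen p), E.fockLin φ a (E.gen q)⁆ := by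
  have h : p ≠ partner q := fun h => notMem_negIdx_of_mem_posIdx (h ▸ hq : p ∈ posIdx d φ) hp
  rw [E.lie_gen_gen (negIdx_subset_basisIdx hp) (negIdx_subset_basisIdx hq), if_neg h, map_zero,
    fockLin_gen_of_mem_negIdx _ hp, fockLin_gen_of_mem_negIdx _ hq, Ring.lie_def, eq_comm,
    sub_eq_zero]
  exact (commute_mulLeft_X _ _).eq

theorem fockLin_lie_gen {p q : ℤ × ℕ} (hp : p ∈ basisIdx d) (hq : q ∈ basisIdx d) :
    E.fockLin φ a ⁅E.gen p, E.gen q⁆ = ⁅E.fockLin φ a (E.gen p), E.fockLin φ a (E.gen q)⁆ := by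
  rcases mem_posIdx_or_mem_negIdx (φ := φ) hp with hp | hp <;>
    rcases mem_posIdx_or_mem_negIdx (φ := φ) hq with hq | hq
  · exact E.fockLin_lie_gen_of_mem_posIdx hp hq
  · exact E.fockLin_lie_gen_of_mem_posIdx_of_mem_negIdx hp hq
  · rw [← lie_skew, map_neg, E.fockLin_lie_gen_of_mem_posIdx_of_mem_negIdx hq hp, lie_skew]
  · exact E.fockLin_lie_gen_of_mem_negIdx hp hq

variable (φ a)

noncomputable def fockRep : L →ₗ⁅ℂ⁆ Module.End ℂ (Fock d φ) :=
  { E.fockLin φ a with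
    map_lie' := fun {x y} => by
      have h : (LieModule.toEnd ℂ L L : L →ₗ[ℂ] L →ₗ[ℂ] L).compr₂ (E.fockLin φ a) =
          (LieModule.toEnd ℂ (Module.End ℂ (Fock d φ)) (Module.End ℂ (Fock d φ)) :
            Module.End ℂ (Fock d φ) →ₗ[ℂ] _ →ₗ[ℂ] _).compl₁₂ (E.fockLin φ a) (E.fockLin φ a) := by
        refine LinearMap.ext_basis E.basis E.basis fun o o' => ?_
        change E.fockLin φ a ⁅E.basis o, E.basis o'⁆ =
          ⁅E.fockLin φ a (E.basis o), E.fockLin φ a (E.basis o')⁆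
        rcases o with _ | ⟨p, hp⟩
        · rw [E.basis_none]
          exact E.fockLin_lie_c _
        rcases o' with _ | ⟨q, hq⟩
        · rw [E.basis_none, ← lie_skew, map_neg, fockLin_lie_c, lie_skew]
        · rw [E.basis_some_eq_gen hp, E.basis_some_eq_gen hq]
          exact E.fockLin_lie_gen hp hq
      exact LinearMap.congr_fun₂ h x y }

noncomputable def fockAlg : UniversalEnvelopingAlgebra ℂ L →ₐ[ℂ] Module.End ℂ (Fock d φ) :=
  lift ℂ (E.fockRep φ a)

/-- `u ↦ u · 1`; it induces the isomorphism of `M_φ(a)` with the Fock space. -/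
noncomputable def toFock : UniversalEnvelopingAlgebra ℂ L →ₗ[ℂ] Fock d φ :=
  LinearMap.applyₗ 1 ∘ₗ (E.fockAlg φ a).toLinearMap

variable {φ a}

theorem fockAlg_ι (x : L) : E.fockAlg φ a (ι ℂ x) = E.fockLin φ a x := by
  rw [fockAlg, lift_ι_apply]
  rfl

theorem toFock_apply (u : UniversalEnvelopingAlgebra ℂ L) : E.toFock φ a u = E.fockAlg φ a u 1 :=
  rfl

theorem toFock_mul (w u : UniversalEnvelopingAlgebra ℂ L) :
    E.toFock φ a (w * u) = E.fockAlg φ a w (E.toFock φ a u) := by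
  rw [toFock_apply, toFock_apply, map_mul, Module.End.mul_apply]

end FockRepresentation

section Creation

variable (E : HeisenbergL d L) (φ : ℕ → Bool)

/-- The inclusion `U(L_φ^-) = ℂ[L_φ^-] → U(L)`. -/
noncomputable def creation : Fock d φ →ₐ[ℂ] UniversalEnvelopingAlgebra ℂ L :=
  aevalOfCommute (fun j : negIdx d φ => ι ℂ (E.gen j)) fun i j =>
    E.commute_ι_gen (negIdx_subset_basisIdx i.2) (negIdx_subset_basisIdx j.2) fun h =>
      notMem_negIdx_of_mem_posIdx (show i.1 ∈ posIdx d φ from h ▸ j.2) i.2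

variable {E φ} {a : ℂ}

theorem creation_X (j : negIdx d φ) : E.creation φ (X j) = ι ℂ (E.gen j) :=
  aevalOfCommute_X _ _ j

theorem toFock_creation (q : Fock d φ) : E.toFock φ a (E.creation φ q) = q := by
  have h : (E.fockAlg φ a).comp (E.creation φ) = Algebra.lmul ℂ (Fock d φ) :=
    MvPolynomial.algHom_ext fun j => by
      rw [AlgHom.comp_apply, creation_X, fockAlg_ι, E.fockLin_gen_of_mem_negIdx j.2]
      rfl
  rw [toFock_apply, ← AlgHom.comp_apply, h]
  simp

theorem ι_gen_mul_creation {p : ℤ × ℕ} (hp : p ∈ posIdx d φ) (q : Fock d φ) :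
    ι ℂ (E.gen p) * E.creation φ q = E.creation φ q * ι ℂ (E.gen p) +
      ((p.1 : ℂ) • ι ℂ E.c) * E.creation φ (pderiv ⟨partner p, partner_mem_negIdx hp⟩ q) := by
  refine mul_algHom_eq_of_X _ _ (fun q => (E.commute_ι_c _).smul_left _) (fun j => ?_) q
  rw [creation_X, E.ι_gen_mul_ι_gen (posIdx_subset_basisIdx hp) (negIdx_subset_basisIdx j.2)]
  by_cases h : p = partner j
  · have hj : (⟨partner p, partner_mem_negIdx hp⟩ : negIdx d φ) = j := by
      ext1
      simp [h]
    rw [if_pos h, hj, pderiv_X_self, map_one, mul_one]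
  · have hj : j ≠ ⟨partner p, partner_mem_negIdx hp⟩ := by
      rintro rfl
      simp at h
    rw [if_neg h, pderiv_X_of_ne hj, map_zero, mul_zero]

end Creation

section VermaIdeal

variable {E : HeisenbergL d L} {φ : ℕ → Bool} {a : ℂ}

theorem ι_c_sub_mem_vermaIdeal :
    ι ℂ E.c - algebraMap ℂ (UniversalEnvelopingAlgebra ℂ L) a ∈ vermaIdeal E φ a :=
  Submodule.subset_span (Set.mem_union_left _ rfl)

theorem ι_gen_mem_vermaIdeal {p : ℤ × ℕ} (hp : p ∈ posIdx d φ) :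
    ι ℂ (E.gen p) ∈ vermaIdeal E φ a :=
  Submodule.subset_span (Set.mem_union_right _ ⟨p, hp, rfl⟩)

theorem toFock_eq_zero_of_mem_vermaIdeal {u : UniversalEnvelopingAlgebra ℂ L}
    (hu : u ∈ vermaIdeal E φ a) : E.toFock φ a u = 0 := by
  induction hu using Submodule.span_induction with
  | mem u hu =>
    rcases hu with rfl | ⟨p, hp, rfl⟩
    · rw [toFock_apply, map_sub, AlgHom.commutes, fockAlg_ι, fockLin_c,
        Algebra.algebraMap_eq_smul_one, sub_self, LinearMap.zero_apply]
    · change E.fockAlg φ a (ι ℂ (E.gen p)) 1 = 0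
      rw [fockAlg_ι, E.fockLin_gen_of_mem_posIdx hp]
      simp
  | zero => exact map_zero _
  | add u v _ _ hu hv => rw [map_add, hu, hv, add_zero]
  | smul w u _ hu => rw [smul_eq_mul, toFock_mul, hu, map_zero]

theorem ι_mul_creation_mem (x : L) (q : Fock d φ) :
    ι ℂ x * E.creation φ q ∈
      (vermaIdeal E φ a).restrictScalars ℂ ⊔ LinearMap.range (E.creation φ).toLinearMap := by
  set S := (vermaIdeal E φ a).restrictScalars ℂ ⊔ LinearMap.range (E.creation φ).toLinearMap
  have hI : ∀ u, ∀ i ∈ vermaIdeal E φ a, u * i ∈ S := fun u i hi =>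
    Submodule.mem_sup_left ((vermaIdeal E φ a).smul_mem u hi)
  have hC : ∀ q, E.creation φ q ∈ S := fun q => Submodule.mem_sup_right ⟨q, rfl⟩
  have hc : ∀ q, ι ℂ E.c * E.creation φ q ∈ S := fun q => by
    have h : ι ℂ E.c * E.creation φ q =
        E.creation φ q * (ι ℂ E.c - algebraMap ℂ _ a) + a • E.creation φ q := by
      rw [mul_sub, ← Algebra.commutes, ← Algebra.smul_def, (E.commute_ι_c _).eq, sub_add_cancel]
    rw [h]
    exact add_mem (hI _ _ ι_c_sub_mem_vermaIdeal) (S.smul_mem a (hC q))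
  suffices h : Submodule.span ℂ (Set.range E.basis) ≤
      S.comap (LinearMap.mulRight ℂ (E.creation φ q) ∘ₗ (ι ℂ : L →ₗ⁅ℂ⁆ _).toLinearMap) by
    exact h (E.basis.span_eq ▸ Submodule.mem_top (x := x))
  rw [Submodule.span_le]
  rintro _ ⟨_ | ⟨p, hp⟩, rfl⟩
  · rw [SetLike.mem_coe, Submodule.mem_comap, E.basis_none]
    exact hc q
  · rw [SetLike.mem_coe, Submodule.mem_comap, E.basis_some_eq_gen hp]
    change ι ℂ (E.gen p) * E.creation φ q ∈ S
    rcases mem_posIdx_or_mem_negIdx (φ := φ) hp with hp | hp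
    · rw [ι_gen_mul_creation hp, smul_mul_assoc]
      exact add_mem (hI _ _ (ι_gen_mem_vermaIdeal hp)) (S.smul_mem _ (hc _))
    · rw [← creation_X ⟨p, hp⟩, ← map_mul]
      exact hC _

theorem vermaIdeal_sup_range_creation :
    (vermaIdeal E φ a).restrictScalars ℂ ⊔ LinearMap.range (E.creation φ).toLinearMap = ⊤ := by
  set S := (vermaIdeal E φ a).restrictScalars ℂ ⊔ LinearMap.range (E.creation φ).toLinearMap
  have hmul : ∀ u, ∀ s ∈ S, u * s ∈ S := by
    intro u
    induction u using UniversalEnvelopingAlgebra.induction with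
    | algebraMap r => exact fun s hs => Algebra.smul_def r s ▸ S.smul_mem r hs
    | ι x =>
      intro s hs
      obtain ⟨i, hi, _, ⟨q, rfl⟩, rfl⟩ := Submodule.mem_sup.mp hs
      exact mul_add (ι ℂ x) i _ ▸ add_mem
        (Submodule.mem_sup_left ((vermaIdeal E φ a).smul_mem _ hi)) (ι_mul_creation_mem x q)
    | mul u v hu hv => exact fun s hs => mul_assoc u v s ▸ hu _ (hv s hs)
    | add u v hu hv => exact fun s hs => add_mul u v s ▸ add_mem (hu s hs) (hv s hs)
  refine eq_top_iff.mpr fun u _ => mul_one u ▸ hmul u 1 ?_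
  exact map_one (E.creation φ) ▸ Submodule.mem_sup_right ⟨1, rfl⟩

theorem mem_vermaIdeal_iff {u : UniversalEnvelopingAlgebra ℂ L} :
    u ∈ vermaIdeal E φ a ↔ E.toFock φ a u = 0 := by
  refine ⟨toFock_eq_zero_of_mem_vermaIdeal, fun hu => ?_⟩
  have hu' : u ∈ (⊤ : Submodule ℂ _) := Submodule.mem_top
  rw [← vermaIdeal_sup_range_creation (E := E) (φ := φ) (a := a)] at hu'
  obtain ⟨i, hi, _, ⟨q, rfl⟩, rfl⟩ := Submodule.mem_sup.mp hu'
  have hq : q = 0 := by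
    rwa [map_add, toFock_eq_zero_of_mem_vermaIdeal hi, zero_add, AlgHom.toLinearMap_apply,
      toFock_creation] at hu
  rwa [hq, map_zero, add_zero]

theorem one_notMem_vermaIdeal : (1 : UniversalEnvelopingAlgebra ℂ L) ∉ vermaIdeal E φ a := by
  simp [mem_vermaIdeal_iff, toFock_apply]

end VermaIdeal

section Simplicity

variable {E : HeisenbergL d L} {φ : ℕ → Bool} {a : ℂ}

theorem exists_fockAlg_eq_pderiv (ha : a ≠ 0) (j : negIdx d φ) :
    ∃ w, E.fockAlg φ a w = (pderiv j).toLinearMap := by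
  have hj : (⟨partner (partner j.1), partner_mem_negIdx j.2⟩ : negIdx d φ) = j :=
    Subtype.ext (partner_partner _)
  have hk : ((partner j.1).1 : ℂ) * a ≠ 0 :=
    mul_ne_zero (Int.cast_ne_zero.mpr (posIdx_subset_basisIdx j.2).1) ha
  refine ⟨(((partner j.1).1 : ℂ) * a)⁻¹ • ι ℂ (E.gen (partner j.1)), ?_⟩
  rw [map_smul, fockAlg_ι, E.fockLin_gen_of_mem_posIdx j.2, hj, smul_smul, inv_mul_cancel₀ hk,
    one_smul]

theorem isCoatom_vermaIdeal (ha : a ≠ 0) : IsCoatom (vermaIdeal E φ a) := by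
  refine ⟨fun h => one_notMem_vermaIdeal (h ▸ Submodule.mem_top), fun J hJ => ?_⟩
  obtain ⟨u, huJ, huI⟩ := SetLike.exists_of_lt hJ
  have hS : ∀ j, ∀ p ∈ (J.restrictScalars ℂ).map (E.toFock φ a),
      pderiv j p ∈ (J.restrictScalars ℂ).map (E.toFock φ a) := by
    rintro j _ ⟨v, hv, rfl⟩
    obtain ⟨w, hw⟩ := exists_fockAlg_eq_pderiv (E := E) ha j
    exact ⟨w * v, J.smul_mem w hv, by rw [toFock_mul, hw]; rfl⟩
  obtain ⟨v, hv, hv1⟩ := one_mem_of_pderiv_mem hS ⟨u, huJ, rfl⟩ (mt mem_vermaIdeal_iff.mpr huI)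
  have hv1I : v - 1 ∈ vermaIdeal E φ a := by
    rw [mem_vermaIdeal_iff, map_sub, hv1, toFock_apply, map_one (E.fockAlg φ a),
      Module.End.one_apply, sub_self]
  rw [Ideal.eq_top_iff_one]
  simpa using J.sub_mem hv (hJ.le hv1I)

theorem vermaIdeal_zero_lt_ker_counit (hd : 1 ≤ d 1) :
    vermaIdeal E φ 0 < RingHom.ker (counit ℂ L) := by
  refine SetLike.lt_iff_le_and_exists.mpr ⟨Submodule.span_le.mpr ?_, ?_⟩
  · rintro _ (rfl | ⟨p, -, rfl⟩)
    · rw [SetLike.mem_coe, RingHom.mem_ker, map_sub, counit_ι]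
      simp
    · exact counit_ι _
  · obtain ⟨j, hj⟩ := negIdx_nonempty (φ := φ) hd
    refine ⟨ι ℂ (E.gen j), counit_ι _, fun h => ?_⟩
    rw [mem_vermaIdeal_iff, toFock_apply, fockAlg_ι, E.fockLin_gen_of_mem_negIdx hj] at h
    simp at h

theorem not_isCoatom_vermaIdeal_zero (hd : 1 ≤ d 1) : ¬IsCoatom (vermaIdeal E φ 0) := by
  intro h
  have h1 : (1 : UniversalEnvelopingAlgebra ℂ L) ∈ RingHom.ker (counit ℂ L) :=
    (h.2 _ (vermaIdeal_zero_lt_ker_counit hd)).symm ▸ Submodule.mem_top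
  simp at h1

end Simplicity

end HeisenbergL

theorem stmt_1 (d : ℕ → ℕ) (hd : ∀ k, 1 ≤ d k) (L : Type) [LieRing L] [LieAlgebra ℂ L]
    (E : HeisenbergL d L) (φ : ℕ → Bool) (a : ℂ) :
    IsSimpleModule (UniversalEnvelopingAlgebra ℂ L) (VermaMod E φ a) ↔ a ≠ 0 := by
  refine isSimpleModule_iff_isCoatom.trans ⟨?_, HeisenbergL.isCoatom_vermaIdeal⟩
  rintro h rfl
  exact HeisenbergL.not_isCoatom_vermaIdeal_zero (hd 1) h
end

section
/- Let V be an irreducible H-module on which c acts as multiplication by a scalar. If for some i ∈ ℤ∖{0} the operator e_i e_{−i} has an eigenvector in V, then V is spanned by eigenvectors of e_i e_{−i}; in particular, e_i e_{−i} is diagonalizable on V and V has an at most countable basis consisting of eigenvectors of e_i e_{−i}. -/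
/-!
Write `Ω = e_i e_{-i}`. Since `[e_i, e_{-i}] = ±c` acts on `V` by a scalar `κ = ±a`, the operator
`e_i` lowers `Ω`-eigenvalues by `κ`, `e_{-i}` raises them by `κ`, and every other basis vector
commutes with both `e_i` and `e_{-i}`, hence preserves each `Ω`-eigenspace. So the span of the
eigenvectors of `Ω` is a nonzero submodule stable under `H`, which is all of `V` by
irreducibility. Irreducibility also makes `V` the span of the iterated brackets of the countably
many basis vectors of `H` applied to one nonzero vector, so `V` has countable dimension and the
spanning set of eigenvectors contains a countable basis.
-/

/-- The infinite-dimensional Heisenberg Lie algebra `H` over ℂ, with basis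
`{c} ∪ {e_i : i ∈ ℤ∖{0}}`, `c` central and `[e_i, e_j] = δ_{i,-j}·c`
(normalized so that `[e_i, e_{-i}] = c` for `i > 0`). -/
structure HeisenbergH (H : Type) [LieRing H] [LieAlgebra ℂ H] : Type where
  c : H
  e : ℤ → H
  basis : Module.Basis (Option {i : ℤ // i ≠ 0}) ℂ H
  basis_none : basis none = c
  basis_some : ∀ i, basis (some i) = e i.1
  lie_c : ∀ y : H, ⁅c, y⁆ = 0
  lie_e_e_same : ∀ i : ℤ, 0 < i → ⁅e i, e (-i)⁆ = c
  lie_e_e_other : ∀ i j : ℤ, i ≠ 0 → j ≠ 0 → i ≠ -j → ⁅e i, e j⁆ = 0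

open Module Submodule Cardinal LieModule

namespace Module.End

variable {R M : Type*} [CommRing R] [AddCommGroup M] [Module R M] {P Q : End R M} {κ : R}

theorem mapsTo_eigenspace_mul_of_commute {X : End R M} (hP : Commute X P) (hQ : Commute X Q)
    (μ : R) : Set.MapsTo X ((P * Q).eigenspace μ) ((P * Q).eigenspace μ) := by
  intro v hv
  rw [SetLike.mem_coe, mem_eigenspace_iff] at hv ⊢
  rw [← Module.End.mul_apply, ← (hP.mul_right hQ).eq, Module.End.mul_apply, hv, map_smul]

theorem mapsTo_eigenspace_mul_left (h : P * Q - Q * P = κ • 1) (μ : R) :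
    Set.MapsTo P ((P * Q).eigenspace μ) ((P * Q).eigenspace (μ - κ)) := by
  intro v hv
  rw [SetLike.mem_coe, mem_eigenspace_iff] at hv ⊢
  have hQP : Q * P = P * Q - κ • 1 := by rw [← h, sub_sub_cancel]
  calc (P * Q) (P v) = P ((Q * P) v) := rfl
    _ = (μ - κ) • P v := by
      rw [hQP, LinearMap.sub_apply, hv, LinearMap.smul_apply, Module.End.one_apply, ← sub_smul,
        map_smul]

theorem mapsTo_eigenspace_mul_right (h : P * Q - Q * P = κ • 1) (μ : R) :
    Set.MapsTo Q ((P * Q).eigenspace μ) ((P * Q).eigenspace (μ + κ)) := by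
  intro v hv
  rw [SetLike.mem_coe, mem_eigenspace_iff] at hv ⊢
  have hPQ : P * Q = Q * P + κ • 1 := by rw [← h, add_sub_cancel]
  calc (P * Q) (Q v) = (Q * P + κ • 1) (Q v) := by rw [← hPQ]
    _ = (μ + κ) • Q v := by
      rw [LinearMap.add_apply, Module.End.mul_apply, ← Module.End.mul_apply P, hv, map_smul,
        LinearMap.smul_apply, Module.End.one_apply, add_smul]

end Module.End

namespace LieModule

variable {R L M : Type*} [CommRing R] [LieRing L] [LieAlgebra R L]
  [AddCommGroup M] [Module R M] [LieRingModule L M] [LieModule R L M]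

theorem toEnd_lie_eq_mul_sub (x y : L) :
    toEnd R L M ⁅x, y⁆ = toEnd R L M x * toEnd R L M y - toEnd R L M y * toEnd R L M x := by
  ext m
  simp

theorem commute_toEnd_of_lie_eq_zero {x y : L} (h : ⁅x, y⁆ = 0) :
    Commute (toEnd R L M x) (toEnd R L M y) := by
  rw [Commute, SemiconjBy, ← sub_eq_zero, ← toEnd_lie_eq_mul_sub, h, map_zero]

theorem lie_mem_span_of_basis {ι : Type*} (b : Basis ι R L) {S : Set M}
    (hS : ∀ j, ∀ w ∈ S, ⁅b j, w⁆ ∈ span R S) (x : L) {v : M} (hv : v ∈ span R S) :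
    ⁅x, v⁆ ∈ span R S := by
  have hx : x ∈ span R (Set.range b) := by rw [b.span_eq]; trivial
  have := apply_mem_map₂ (toEnd R L M : L →ₗ[R] End R M) hx hv
  rw [map₂_span_span] at this
  refine span_le.2 ?_ this
  rintro _ ⟨_, ⟨j, rfl⟩, w, hw, rfl⟩
  exact hS j w hw

theorem span_eq_top_of_lie_basis_mem (hirr : ∀ N : LieSubmodule R L M, N = ⊥ ∨ N = ⊤)
    {ι : Type*} (b : Basis ι R L) {S : Set M} (hS : ∀ j, ∀ w ∈ S, ⁅b j, w⁆ ∈ span R S)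
    {v : M} (hvS : v ∈ S) (hv : v ≠ 0) : span R S = ⊤ := by
  let N : LieSubmodule R L M :=
    { span R S with lie_mem := fun hw => lie_mem_span_of_basis b hS _ hw }
  rcases hirr N with h | h
  · have hvN : v ∈ N := subset_span hvS
    rw [h, LieSubmodule.mem_bot] at hvN
    exact absurd hvN hv
  · exact congrArg LieSubmodule.toSubmodule h

theorem rank_le_aleph0_of_irreducible {K L M : Type*} [Field K] [LieRing L] [LieAlgebra K L]
    [AddCommGroup M] [Module K M] [LieRingModule L M] [LieModule K L M]
    (hirr : ∀ N : LieSubmodule K L M, N = ⊥ ∨ N = ⊤)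
    {ι : Type*} [Countable ι] (b : Basis ι K L) {v : M} (hv : v ≠ 0) :
    Module.rank K M ≤ ℵ₀ := by
  let f : List ι → M := fun l => l.foldr (fun j w => ⁅b j, w⁆) v
  have hspan : span K (Set.range f) = ⊤ :=
    span_eq_top_of_lie_basis_mem hirr b
      (by rintro j _ ⟨l, rfl⟩; exact subset_span ⟨j :: l, rfl⟩) ⟨[], rfl⟩ hv
  calc Module.rank K M = Module.rank K (span K (Set.range f)) := by rw [hspan, rank_top]
    _ ≤ #(Set.range f) := rank_span_le _
    _ ≤ ℵ₀ := mk_le_aleph0_iff.2 (Set.countable_range f).to_subtype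

end LieModule

theorem exists_countable_basis_subset {K V : Type*} [DivisionRing K] [AddCommGroup V]
    [Module K V] (hrank : Module.rank K V ≤ ℵ₀) {S : Set V} (hS : span K S = ⊤) :
    ∃ t ⊆ S, t.Countable ∧ Nonempty (Basis t K V) :=
  let B := Basis.ofSpan hS.ge
  ⟨_, LinearIndepOn.extend_subset _ _, Set.countable_coe_iff.1
    (mk_le_aleph0_iff.1 (B.mk_eq_rank''.trans_le hrank)), ⟨B⟩⟩

namespace HeisenbergH

variable {H : Type} [LieRing H] [LieAlgebra ℂ H] (E : HeisenbergH H)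

theorem lie_e_e_neg {i : ℤ} (hi : i ≠ 0) : ⁅E.e i, E.e (-i)⁆ = (i.sign : ℂ) • E.c := by
  rcases hi.lt_or_gt with h | h
  · have h' := E.lie_e_e_same (-i) (by omega)
    rw [neg_neg] at h'
    rw [← lie_skew, h', Int.sign_eq_neg_one_of_neg h]
    simp
  · rw [E.lie_e_e_same i h, Int.sign_eq_one_of_pos h]
    simp

variable {V : Type} [AddCommGroup V] [Module ℂ V] [LieRingModule H V] [LieModule ℂ H V]

theorem toEnd_e_mul_sub_mul {a : ℂ} (hc : ∀ v : V, ⁅E.c, v⁆ = a • v) {i : ℤ} (hi : i ≠ 0) :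
    toEnd ℂ H V (E.e i) * toEnd ℂ H V (E.e (-i)) -
      toEnd ℂ H V (E.e (-i)) * toEnd ℂ H V (E.e i) =
      ((i.sign : ℂ) * a) • 1 := by
  rw [← toEnd_lie_eq_mul_sub, E.lie_e_e_neg hi]
  ext v
  simp [hc, smul_smul]

theorem mapsTo_toEnd_basis_iUnion_eigenspace {a : ℂ} (hc : ∀ v : V, ⁅E.c, v⁆ = a • v) {i : ℤ}
    (hi : i ≠ 0) (j : Option {k : ℤ // k ≠ 0}) :
    Set.MapsTo (toEnd ℂ H V (E.basis j))
      (⋃ μ, ((toEnd ℂ H V (E.e i) * toEnd ℂ H V (E.e (-i))).eigenspace μ))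
      (⋃ μ, ((toEnd ℂ H V (E.e i) * toEnd ℂ H V (E.e (-i))).eigenspace μ)) := by
  have hPQ := E.toEnd_e_mul_sub_mul hc hi
  intro v hv
  obtain ⟨μ, hv⟩ := Set.mem_iUnion.1 hv
  refine Set.mem_iUnion.2 ?_
  rcases j with _ | ⟨j, hj⟩
  · rw [E.basis_none]
    exact ⟨μ, Module.End.mapsTo_eigenspace_mul_of_commute
      (commute_toEnd_of_lie_eq_zero (E.lie_c _))
      (commute_toEnd_of_lie_eq_zero (E.lie_c _)) μ hv⟩
  · rw [E.basis_some]
    by_cases hji : j = i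
    · subst hji
      exact ⟨_, Module.End.mapsTo_eigenspace_mul_left hPQ μ hv⟩
    by_cases hjni : j = -i
    · subst hjni
      exact ⟨_, Module.End.mapsTo_eigenspace_mul_right hPQ μ hv⟩
    exact ⟨μ, Module.End.mapsTo_eigenspace_mul_of_commute
      (commute_toEnd_of_lie_eq_zero (E.lie_e_e_other j i hj hi (by omega)))
      (commute_toEnd_of_lie_eq_zero
        (E.lie_e_e_other j (-i) hj (neg_ne_zero.2 hi) (by omega))) μ hv⟩

end HeisenbergH

theorem stmt_4_general (H : Type) [LieRing H] [LieAlgebra ℂ H] (E : HeisenbergH H)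
    (V : Type) [AddCommGroup V] [Module ℂ V] [LieRingModule H V] [LieModule ℂ H V]
    (hirr : ∀ N : LieSubmodule ℂ H V, N = ⊥ ∨ N = ⊤)
    (a : ℂ) (hc : ∀ v : V, ⁅E.c, v⁆ = a • v)
    (i : ℤ) (hi : i ≠ 0)
    (htor : ∃ v : V, v ≠ 0 ∧ ∃ μ : ℂ, ⁅E.e i, ⁅E.e (-i), v⁆⁆ = μ • v) :
    Submodule.span ℂ {v : V | v ≠ 0 ∧ ∃ μ : ℂ, ⁅E.e i, ⁅E.e (-i), v⁆⁆ = μ • v} = ⊤ ∧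
    ∃ s : Set V, s.Countable ∧
      (∀ v ∈ s, ∃ μ : ℂ, ⁅E.e i, ⁅E.e (-i), v⁆⁆ = μ • v) ∧
      Nonempty (Module.Basis s ℂ V) := by
  obtain ⟨v₀, hv₀, μ₀, hμ₀⟩ := htor
  set Ω := toEnd ℂ H V (E.e i) * toEnd ℂ H V (E.e (-i))
  have hS : {v : V | v ≠ 0 ∧ ∃ μ : ℂ, ⁅E.e i, ⁅E.e (-i), v⁆⁆ = μ • v} =
      (⋃ μ, (Ω.eigenspace μ : Set V)) \ {0} := by
    ext v
    simp [Ω, and_comm]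
  have hspan : span ℂ {v : V | v ≠ 0 ∧ ∃ μ : ℂ, ⁅E.e i, ⁅E.e (-i), v⁆⁆ = μ • v} = ⊤ := by
    rw [hS, span_sdiff_singleton_zero]
    exact span_eq_top_of_lie_basis_mem hirr E.basis
      (fun j w hw => subset_span (E.mapsTo_toEnd_basis_iUnion_eigenspace hc hi j hw))
      (Set.mem_iUnion.2 ⟨μ₀, Module.End.mem_eigenspace_iff.2 hμ₀⟩) hv₀
  obtain ⟨t, hts, htc, hB⟩ := exists_countable_basis_subset
    (rank_le_aleph0_of_irreducible hirr E.basis hv₀) hspan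
  exact ⟨hspan, t, htc, fun v hv => (hts hv).2, hB⟩

theorem stmt_4 (H : Type) [LieRing H] [LieAlgebra ℂ H] (E : HeisenbergH H)
    (V : Type) [AddCommGroup V] [Module ℂ V] [LieRingModule H V] [LieModule ℂ H V]
    (hnt : Nontrivial V)
    (hirr : ∀ N : LieSubmodule ℂ H V, N = ⊥ ∨ N = ⊤)
    (a : ℂ) (hc : ∀ v : V, ⁅E.c, v⁆ = a • v)
    (i : ℤ) (hi : i ≠ 0)
    (htor : ∃ v : V, v ≠ 0 ∧ ∃ μ : ℂ, ⁅E.e i, ⁅E.e (-i), v⁆⁆ = μ • v) :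
    Submodule.span ℂ {v : V | v ≠ 0 ∧ ∃ μ : ℂ, ⁅E.e i, ⁅E.e (-i), v⁆⁆ = μ • v} = ⊤ ∧
    ∃ s : Set V, s.Countable ∧
      (∀ v ∈ s, ∃ μ : ℂ, ⁅E.e i, ⁅E.e (-i), v⁆⁆ = μ • v) ∧
      Nonempty (Module.Basis s ℂ V) :=
  stmt_4_general H E V hirr a hc i hi htor
end

section
/- Let V be an irreducible H-module on which c acts as multiplication by a scalar, and suppose V is diagonal, i.e., the operators e_i e_{−i}, i ∈ ℤ∖{0}, have a common eigenvector in V. Then V has a basis consisting of simultaneous eigenvectors of all the operators e_i e_{−i}, i ∈ ℤ∖{0}; that is, these operators are simultaneously diagonalizable on V. -/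
theorem Submodule.lie_mem_span_of_span_eq_top {R L M : Type*} [CommRing R] [LieRing L]
    [LieAlgebra R L] [AddCommGroup M] [Module R M] [LieRingModule L M] [LieModule R L M]
    {T : Set L} (hT : span R T = ⊤) {S : Set M}
    (hTS : ∀ x ∈ T, ∀ m ∈ S, ⁅x, m⁆ ∈ span R S) (x : L) {m : M} (hm : m ∈ span R S) :
    ⁅x, m⁆ ∈ span R S := by
  induction hm using span_induction with
  | mem m hm =>
    have hx : x ∈ span R T := hT ▸ mem_top
    induction hx using span_induction with
    | mem y hy => exact hTS y hy m hm
    | zero => simp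
    | add y z _ _ hy hz => simpa only [add_lie] using add_mem hy hz
    | smul r y _ hy => simpa only [smul_lie] using smul_mem _ r hy
  | zero => simp
  | add m n _ _ hm hn => simpa only [lie_add] using add_mem hm hn
  | smul r m _ hm => simpa only [lie_smul] using smul_mem _ r hm

namespace HeisenbergH

variable {H : Type} [LieRing H] [LieAlgebra ℂ H] (E : HeisenbergH H)
variable {V : Type} [AddCommGroup V] [Module ℂ V] [LieRingModule H V] [LieModule ℂ H V]

theorem lie_e_e {i j : ℤ} (hi : i ≠ 0) (hj : j ≠ 0) :
    ⁅E.e i, E.e j⁆ = if i = -j then (i.sign : ℂ) • E.c else 0 := by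
  split_ifs with hij
  · obtain rfl : j = -i := by omega
    rcases hi.lt_or_gt with hneg | hpos
    · rw [← lie_skew, ← E.lie_e_e_same (-i) (by omega), neg_neg, Int.sign_eq_neg_one_of_neg hneg]
      simp
    · rw [E.lie_e_e_same i hpos, Int.sign_eq_one_of_pos hpos]
      simp
  · exact E.lie_e_e_other i j hi hj hij

theorem lie_e_lie_e_neg_lie_e {a : ℂ} (hc : ∀ v : V, ⁅E.c, v⁆ = a • v) {i j : ℤ}
    (hi : i ≠ 0) (hj : j ≠ 0) (w : V) :
    ⁅E.e i, ⁅E.e (-i), ⁅E.e j, w⁆⁆⁆ = ⁅E.e j, ⁅E.e i, ⁅E.e (-i), w⁆⁆⁆ +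
      ((if i = -j then (i.sign : ℂ) * a else 0) - if i = j then (i.sign : ℂ) * a else 0) •
        ⁅E.e j, w⁆ := by
  rw [leibniz_lie (E.e (-i)) (E.e j) w, lie_add, leibniz_lie (E.e i) (E.e j),
    E.lie_e_e hi hj, E.lie_e_e (neg_ne_zero.mpr hi) hj]
  simp only [neg_inj, Int.sign_neg, Int.cast_neg]
  split_ifs with hij hij' hij'
  · omega
  · subst hij
    simp [hc, mul_smul, add_comm]
  · obtain rfl : j = -i := by omega
    simp [hc, mul_smul, add_comm]
  · simp

/-- Zero is included, so that the set of such vectors is stable under every `⁅E.e j, ·⁆`. -/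
def IsWeightVector (w : V) : Prop :=
  ∀ i : ℤ, i ≠ 0 → ∃ μ : ℂ, ⁅E.e i, ⁅E.e (-i), w⁆⁆ = μ • w

variable {E}

theorem IsWeightVector.lie_e {a : ℂ} (hc : ∀ v : V, ⁅E.c, v⁆ = a • v) {j : ℤ} (hj : j ≠ 0)
    {w : V} (hw : E.IsWeightVector w) : E.IsWeightVector ⁅E.e j, w⁆ := by
  intro i hi
  obtain ⟨μ, hμ⟩ := hw i hi
  exact ⟨μ + _, by rw [E.lie_e_lie_e_neg_lie_e hc hi hj, hμ, lie_smul, add_smul]⟩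

theorem lie_mem_span_isWeightVector {a : ℂ} (hc : ∀ v : V, ⁅E.c, v⁆ = a • v) (x : H) {m : V}
    (hm : m ∈ Submodule.span ℂ {w : V | E.IsWeightVector w}) :
    ⁅x, m⁆ ∈ Submodule.span ℂ {w : V | E.IsWeightVector w} := by
  refine Submodule.lie_mem_span_of_span_eq_top E.basis.span_eq ?_ x hm
  rintro _ ⟨_ | i, rfl⟩ w hw
  · rw [E.basis_none, hc]
    exact Submodule.smul_mem _ a (Submodule.subset_span hw)
  · rw [E.basis_some]
    exact Submodule.subset_span (hw.lie_e hc i.2)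

theorem span_isWeightVector_eq_top (hirr : ∀ N : LieSubmodule ℂ H V, N = ⊥ ∨ N = ⊤) {a : ℂ}
    (hc : ∀ v : V, ⁅E.c, v⁆ = a • v) {v : V} (hv0 : v ≠ 0) (hv : E.IsWeightVector v) :
    Submodule.span ℂ {w : V | E.IsWeightVector w} = ⊤ := by
  obtain ⟨N, hN⟩ :=
    (Submodule.span ℂ {w : V | E.IsWeightVector w}).exists_lieSubmodule_coe_eq_iff H
      |>.mpr fun x _ => lie_mem_span_isWeightVector hc x
  rcases hirr N with rfl | rfl
  · have hv_mem : v ∈ (⊥ : LieSubmodule ℂ H V).toSubmodule := hN ▸ Submodule.subset_span hv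
    exact absurd hv_mem hv0
  · exact hN.symm

end HeisenbergH

theorem stmt_6_general (H : Type) [LieRing H] [LieAlgebra ℂ H] (E : HeisenbergH H)
    (V : Type) [AddCommGroup V] [Module ℂ V] [LieRingModule H V] [LieModule ℂ H V]
    (hirr : ∀ N : LieSubmodule ℂ H V, N = ⊥ ∨ N = ⊤)
    (a : ℂ) (hc : ∀ v : V, ⁅E.c, v⁆ = a • v)
    (hdiag : ∃ v : V, v ≠ 0 ∧ ∀ i : ℤ, i ≠ 0 → ∃ μ : ℂ, ⁅E.e i, ⁅E.e (-i), v⁆⁆ = μ • v) :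
    ∃ s : Set V,
      (∀ w ∈ s, ∀ i : ℤ, i ≠ 0 → ∃ μ : ℂ, ⁅E.e i, ⁅E.e (-i), w⁆⁆ = μ • w) ∧
      Nonempty (Module.Basis s ℂ V) := by
  obtain ⟨v, hv0, hv⟩ := hdiag
  have hspan := HeisenbergH.span_isWeightVector_eq_top hirr hc hv0 hv
  exact ⟨_, fun w hw => (linearIndepOn_empty ℂ id).extend_subset (Set.empty_subset _) hw,
    ⟨.ofSpan hspan.ge⟩⟩

theorem stmt_6 (H : Type) [LieRing H] [LieAlgebra ℂ H] (E : HeisenbergH H)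
    (V : Type) [AddCommGroup V] [Module ℂ V] [LieRingModule H V] [LieModule ℂ H V]
    (hnt : Nontrivial V)
    (hirr : ∀ N : LieSubmodule ℂ H V, N = ⊥ ∨ N = ⊤)
    (a : ℂ) (hc : ∀ v : V, ⁅E.c, v⁆ = a • v)
    (hdiag : ∃ v : V, v ≠ 0 ∧ ∀ i : ℤ, i ≠ 0 → ∃ μ : ℂ, ⁅E.e i, ⁅E.e (-i), v⁆⁆ = μ • v) :
    ∃ s : Set V,
      (∀ w ∈ s, ∀ i : ℤ, i ≠ 0 → ∃ μ : ℂ, ⁅E.e i, ⁅E.e (-i), w⁆⁆ = μ • w) ∧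
      Nonempty (Module.Basis s ℂ V) :=
  stmt_6_general H E V hirr a hc hdiag
end

section
/- Let V be a ℤ-graded irreducible diagonal H-module of level a ≠ 0. Then V admits a ℤ^∞-gradation: there exists a family of subspaces V_{k̄} of V, indexed by the finitely supported functions k̄ : ℕ → ℤ, such that V is the (internal) direct sum of the V_{k̄}, each V_{k̄} is at most one-dimensional, and for every j ∈ ℕ and every such k̄ one has e_j·V_{k̄} ⊆ V_{k̄+ζ_j} and e_{−j}·V_{k̄} ⊆ V_{k̄−ζ_j}, where ζ_j : ℕ → ℤ is given by ζ_j(j) = 1 and ζ_j(i) = 0 for i ≠ j. -/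
open LieModule

section Ladder

variable {R M : Type*} [CommRing R] [AddCommGroup M] [Module R M] {p m : Module.End R M}

def ladder (p m : Module.End R M) (n : ℤ) : Module.End R M := p ^ n.toNat * m ^ (-n).toNat

lemma ladder_zero : ladder p m 0 = 1 := by
  simp [ladder]

lemma ladder_add_one {n : ℤ} (hn : 0 ≤ n) : ladder p m (n + 1) = p * ladder p m n := by
  have h₁ : (n + 1).toNat = n.toNat + 1 := by omega
  have h₂ : (-(n + 1)).toNat = 0 := by omega
  have h₃ : (-n).toNat = 0 := by omega
  rw [ladder, ladder, h₁, h₂, h₃, pow_zero, mul_one, mul_one, pow_succ']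

lemma ladder_sub_one {n : ℤ} (hn : n ≤ 0) : ladder p m (n - 1) = m * ladder p m n := by
  have h₁ : (-(n - 1)).toNat = (-n).toNat + 1 := by omega
  have h₂ : (n - 1).toNat = 0 := by omega
  have h₃ : n.toNat = 0 := by omega
  rw [ladder, ladder, h₁, h₂, h₃, pow_zero, one_mul, one_mul, pow_succ']

lemma commute_ladder {T : Module.End R M} (hp : Commute T p) (hm : Commute T m) (n : ℤ) :
    Commute T (ladder p m n) :=
  (hp.pow_right _).mul_right (hm.pow_right _)

variable {a : R} (hpm : p * m = m * p + a • 1)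
include hpm

lemma apply_apply_eq_of_mul_eq (w : M) : p (m w) = m (p w) + a • w := by
  simpa using LinearMap.congr_fun hpm w

section Eigenvector

variable {ν : R} {w : M} (hw : (p * m) w = ν • w)
include hw

lemma swap_mul_apply_of_mul_apply_eq : (m * p) w = (ν - a) • w := by
  have := apply_apply_eq_of_mul_eq hpm w
  simp only [Module.End.mul_apply] at hw ⊢
  rw [sub_smul, ← hw, this, add_sub_cancel_right]

lemma mul_apply_left_of_mul_apply_eq : (p * m) (p w) = (ν - a) • p w := by
  rw [Module.End.mul_apply, ← Module.End.mul_apply m, swap_mul_apply_of_mul_apply_eq hpm hw,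
    map_smul]

lemma mul_apply_right_of_mul_apply_eq : (p * m) (m w) = (ν + a) • m w := by
  rw [Module.End.mul_apply, apply_apply_eq_of_mul_eq hpm, ← Module.End.mul_apply p, hw, map_smul,
    add_smul]

end Eigenvector

variable {μ : R} {v : M} (hv : (p * m) v = μ • v)
include hv

lemma mul_apply_ladder (n : ℤ) : (p * m) (ladder p m n v) = (μ - n * a) • ladder p m n v := by
  induction n using Int.induction_on with
  | zero => simpa [ladder_zero] using hv
  | succ n ih =>
    rw [ladder_add_one (by positivity), Module.End.mul_apply p (ladder p m n),
      mul_apply_left_of_mul_apply_eq hpm ih]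
    congr 1
    push_cast
    ring
  | pred n ih =>
    rw [ladder_sub_one (by omega), Module.End.mul_apply m (ladder p m (-n)),
      mul_apply_right_of_mul_apply_eq hpm ih]
    congr 1
    push_cast
    ring

lemma apply_ladder_mem_span_add_one (n : ℤ) :
    p (ladder p m n v) ∈ R ∙ ladder p m (n + 1) v := by
  rcases le_or_gt 0 n with hn | hn
  · rw [ladder_add_one hn]
    exact Submodule.mem_span_singleton_self _
  · rw [show n = n + 1 - 1 by ring, ladder_sub_one (by omega), add_sub_cancel_right,
      Module.End.mul_apply m, ← Module.End.mul_apply p m, mul_apply_ladder hpm hv]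
    exact Submodule.smul_mem _ _ (Submodule.mem_span_singleton_self _)

lemma apply_ladder_mem_span_sub_one (n : ℤ) :
    m (ladder p m n v) ∈ R ∙ ladder p m (n - 1) v := by
  rcases le_or_gt n 0 with hn | hn
  · rw [ladder_sub_one hn]
    exact Submodule.mem_span_singleton_self _
  · rw [show n = n - 1 + 1 by ring, ladder_add_one (by omega), add_sub_cancel_right,
      Module.End.mul_apply p, ← Module.End.mul_apply m p,
      swap_mul_apply_of_mul_apply_eq hpm (mul_apply_ladder hpm hv _)]
    exact Submodule.smul_mem _ _ (Submodule.mem_span_singleton_self _)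

end Ladder

lemma LieModule.toEnd_mul_toEnd {R L M : Type*} [CommRing R] [LieRing L] [LieAlgebra R L]
    [AddCommGroup M] [Module R M] [LieRingModule L M] [LieModule R L M] (x y : L) :
    toEnd R L M x * toEnd R L M y = toEnd R L M y * toEnd R L M x + toEnd R L M ⁅x, y⁆ := by
  ext m
  simp

lemma iSupIndep_span_singleton_of_apply_eq_smul {ι κ K M : Type*} [Field K] [AddCommGroup M]
    [Module K M] {f : ι → Module.End K M} (hf : ∀ i i', Commute (f i) (f i')) {w : κ → M}
    {χ : κ → ι → K} (hχ : Function.Injective χ) (hw : ∀ k i, f i (w k) = χ k i • w k) :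
    iSupIndep fun k => K ∙ w k := by
  refine ((Module.End.independent_iInf_maxGenEigenspace_of_forall_mapsTo f fun i i' φ =>
    Module.End.mapsTo_maxGenEigenspace_of_comm (hf i' i) φ).comp hχ).mono fun k => ?_
  rw [Submodule.span_singleton_le_iff_mem, Function.comp_apply, Submodule.mem_iInf]
  exact fun i =>
    Module.End.eigenspace_le_maxGenEigenspace (Module.End.mem_eigenspace_iff.2 (hw k i))

lemma Submodule.iSup_le_comap_iSup {R M : Type*} [Semiring R] [AddCommMonoid M] [Module R M]
    {ι : Type*} {W : ι → Submodule R M} {f : M →ₗ[R] M} (h : ∀ k, ∃ k', W k ≤ (W k').comap f) :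
    ⨆ k, W k ≤ (⨆ k, W k).comap f :=
  iSup_le fun k => (h k).elim fun k' hk => hk.trans (comap_mono (le_iSup W k'))

lemma Submodule.eq_top_of_le_comap_toEnd {R L M : Type*} [CommRing R] [LieRing L]
    [LieAlgebra R L] [AddCommGroup M] [Module R M] [LieRingModule L M] [LieModule R L M]
    (hirr : ∀ N : LieSubmodule R L M, N = ⊥ ∨ N = ⊤) {S : Set L} (hS : span R S = ⊤)
    {U : Submodule R M} (hU : ∀ x ∈ S, U ≤ U.comap (toEnd R L M x)) {v : M} (hv : v ∈ U)
    (hv0 : v ≠ 0) : U = ⊤ := by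
  have hlie (x : L) : U ≤ U.comap (toEnd R L M x) := by
    induction (hS ▸ mem_top : x ∈ span R S) using span_induction with
    | mem x hx => exact hU x hx
    | zero => simp
    | add x y _ _ hx hy => exact fun u hu => by simpa using U.add_mem (hx hu) (hy hu)
    | smul t x _ hx => exact fun u hu => by simpa using U.smul_mem t (hx hu)
  let N : LieSubmodule R L M := { U with lie_mem := fun {x _} hu => hlie x hu }
  obtain hN | hN := hirr N
  · exact absurd (show v ∈ N from hv) (by simpa [hN] using hv0)
  · exact congrArg LieSubmodule.toSubmodule hN

lemma Int.exists_pnat_eq_or_eq_neg {i : ℤ} (hi : i ≠ 0) : ∃ j : ℕ+, i = j ∨ i = -j :=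
  ⟨⟨i.natAbs, Int.natAbs_pos.2 hi⟩, Int.natAbs_eq i⟩

namespace HeisenbergH

variable {H : Type} [LieRing H] [LieAlgebra ℂ H] (E : HeisenbergH H)
  {V : Type*} [AddCommGroup V] [Module ℂ V] [LieRingModule H V] [LieModule ℂ H V]

lemma commute_toEnd_e {i i' : ℤ} (hi : i ≠ 0) (hi' : i' ≠ 0) (h : i ≠ -i') :
    Commute (toEnd ℂ H V (E.e i)) (toEnd ℂ H V (E.e i')) := by
  rw [Commute, SemiconjBy, toEnd_mul_toEnd, E.lie_e_e_other i i' hi hi' h, map_zero, add_zero]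

lemma toEnd_e_mul_toEnd_e_neg {a : ℂ} (hc : ∀ v : V, ⁅E.c, v⁆ = a • v) (j : ℕ+) :
    toEnd ℂ H V (E.e j) * toEnd ℂ H V (E.e (-j)) =
      toEnd ℂ H V (E.e (-j)) * toEnd ℂ H V (E.e j) + a • 1 := by
  rw [toEnd_mul_toEnd, E.lie_e_e_same _ (by positivity)]
  ext v
  simp [hc]

variable (V) in
def modeLadder (j : ℕ+) (n : ℤ) : Module.End ℂ V :=
  ladder (toEnd ℂ H V (E.e j)) (toEnd ℂ H V (E.e (-j))) n

lemma commute_toEnd_e_modeLadder {i : ℤ} {j : ℕ+} (hi : i ≠ 0) (hij : i.natAbs ≠ j) (n : ℤ) :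
    Commute (toEnd ℂ H V (E.e i)) (E.modeLadder V j n) :=
  commute_ladder (E.commute_toEnd_e hi (by positivity) (by omega))
    (E.commute_toEnd_e hi (by simp) (by omega)) n

lemma commute_modeLadder {j j' : ℕ+} (h : j ≠ j') (n n' : ℤ) :
    Commute (E.modeLadder V j n) (E.modeLadder V j' n') :=
  (commute_ladder (E.commute_toEnd_e_modeLadder (i := j) (by positivity) (by simpa) n').symm
    (E.commute_toEnd_e_modeLadder (i := -j) (by simp) (by simpa) n').symm n).symm

variable (V) in
def ladderProd (s : Finset ℕ+) (k : ℕ+ →₀ ℤ) : Module.End ℂ V :=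
  s.noncommProd (fun j => E.modeLadder V j (k j)) fun _ _ _ _ h => E.commute_modeLadder h _ _

def ladderVec (v : V) (k : ℕ+ →₀ ℤ) : V :=
  E.ladderProd V k.support k v

lemma ladderVec_eq_ladderProd_erase (v : V) (k : ℕ+ →₀ ℤ) (j : ℕ+) :
    E.ladderVec v k = E.ladderProd V (k.support.erase j) k (E.modeLadder V j (k j) v) := by
  by_cases hj : j ∈ k.support
  · rw [← Module.End.mul_apply, ladderProd, Finset.noncommProd_erase_mul _ hj]
    rfl
  · rw [Finsupp.notMem_support_iff.1 hj, modeLadder, ladder_zero, Finset.erase_eq_of_notMem hj]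
    rfl

lemma ladderProd_support_erase_congr {k k' : ℕ+ →₀ ℤ} {j : ℕ+} (h : ∀ i ≠ j, k i = k' i) :
    E.ladderProd V (k.support.erase j) k = E.ladderProd V (k'.support.erase j) k' := by
  have hs : k.support.erase j = k'.support.erase j := by
    ext i
    by_cases hi : i = j <;> simp [hi, h]
  unfold ladderProd
  exact Finset.noncommProd_congr hs (fun i hi => by rw [h i (Finset.ne_of_mem_erase hi)]) _

lemma apply_ladderVec {T : Module.End ℂ V} {j : ℕ+}
    (hT : ∀ j' ≠ j, ∀ n, Commute T (E.modeLadder V j' n)) (v : V) (k : ℕ+ →₀ ℤ) :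
    T (E.ladderVec v k) =
      E.ladderProd V (k.support.erase j) k (T (E.modeLadder V j (k j) v)) := by
  have hcomm : Commute T (E.ladderProd V (k.support.erase j) k) :=
    Finset.noncommProd_commute _ _ _ _ fun i hi => hT i (Finset.ne_of_mem_erase hi) _
  rw [E.ladderVec_eq_ladderProd_erase v k j, ← Module.End.mul_apply, hcomm.eq]
  rfl

lemma commute_toEnd_e_mul_toEnd_e_neg (j j' : ℕ+) :
    Commute (toEnd ℂ H V (E.e j) * toEnd ℂ H V (E.e (-j)))
      (toEnd ℂ H V (E.e j') * toEnd ℂ H V (E.e (-j'))) := by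
  obtain rfl | h := eq_or_ne j j'
  · exact Commute.refl _
  have hcomm (i i' : ℤ) (hi : i.natAbs = j) (hi' : i'.natAbs = j') :
      Commute (toEnd ℂ H V (E.e i)) (toEnd ℂ H V (E.e i')) := by
    have : (j : ℕ) ≠ j' := by simpa
    have := j.pos
    have := j'.pos
    exact E.commute_toEnd_e (by omega) (by omega) (by omega)
  exact ((hcomm _ _ (by simp) (by simp)).mul_right (hcomm _ _ (by simp) (by simp))).mul_left
    ((hcomm _ _ (by simp) (by simp)).mul_right (hcomm _ _ (by simp) (by simp)))

lemma ladderVec_zero (v : V) : E.ladderVec v 0 = v := by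
  simp [ladderVec, ladderProd]

section Diagonal

variable {a : ℂ} (hc : ∀ v : V, ⁅E.c, v⁆ = a • v) {j : ℕ+} {μ : ℂ} {v : V}
  (hv : (toEnd ℂ H V (E.e j) * toEnd ℂ H V (E.e (-j))) v = μ • v)
include hc hv

lemma span_ladderVec_le_comap_toEnd_e (k : ℕ+ →₀ ℤ) :
    ℂ ∙ E.ladderVec v k ≤
      (ℂ ∙ E.ladderVec v (k + Finsupp.single j 1)).comap (toEnd ℂ H V (E.e j)) := by
  have hk : ∀ i ≠ j, k i = (k + Finsupp.single j 1 : ℕ+ →₀ ℤ) i := fun i hi => by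
    simp [Ne.symm hi]
  have hmem :
      toEnd ℂ H V (E.e j) (E.modeLadder V j (k j) v) ∈ ℂ ∙ E.modeLadder V j (k j + 1) v :=
    apply_ladder_mem_span_add_one (E.toEnd_e_mul_toEnd_e_neg hc j) hv (k j)
  rw [Submodule.span_singleton_le_iff_mem, Submodule.mem_comap,
    E.apply_ladderVec fun j' hj' n =>
      E.commute_toEnd_e_modeLadder (by positivity) (by simpa using hj'.symm) n,
    E.ladderVec_eq_ladderProd_erase v _ j, ← E.ladderProd_support_erase_congr hk]
  simpa using Submodule.apply_mem_span_image_of_mem_span (E.ladderProd V _ k) hmem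

lemma span_ladderVec_le_comap_toEnd_e_neg (k : ℕ+ →₀ ℤ) :
    ℂ ∙ E.ladderVec v k ≤
      (ℂ ∙ E.ladderVec v (k - Finsupp.single j 1)).comap (toEnd ℂ H V (E.e (-j))) := by
  have hk : ∀ i ≠ j, k i = (k - Finsupp.single j 1 : ℕ+ →₀ ℤ) i := fun i hi => by
    simp [Ne.symm hi]
  have hmem :
      toEnd ℂ H V (E.e (-j)) (E.modeLadder V j (k j) v) ∈ ℂ ∙ E.modeLadder V j (k j - 1) v :=
    apply_ladder_mem_span_sub_one (E.toEnd_e_mul_toEnd_e_neg hc j) hv (k j)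
  rw [Submodule.span_singleton_le_iff_mem, Submodule.mem_comap,
    E.apply_ladderVec fun j' hj' n =>
      E.commute_toEnd_e_modeLadder (by simp) (by simpa using hj'.symm) n,
    E.ladderVec_eq_ladderProd_erase v _ j, ← E.ladderProd_support_erase_congr hk]
  simpa using Submodule.apply_mem_span_image_of_mem_span (E.ladderProd V _ k) hmem

lemma mul_apply_ladderVec (k : ℕ+ →₀ ℤ) :
    (toEnd ℂ H V (E.e j) * toEnd ℂ H V (E.e (-j))) (E.ladderVec v k) =
      (μ - k j * a) • E.ladderVec v k := by
  have hT : ∀ j' ≠ j, ∀ n, Commute (toEnd ℂ H V (E.e j) * toEnd ℂ H V (E.e (-j)))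
      (E.modeLadder V j' n) := fun j' hj' n =>
    (E.commute_toEnd_e_modeLadder (by positivity) (by simpa using hj'.symm) n).mul_left
      (E.commute_toEnd_e_modeLadder (by simp) (by simpa using hj'.symm) n)
  rw [E.apply_ladderVec hT, modeLadder, mul_apply_ladder (E.toEnd_e_mul_toEnd_e_neg hc j) hv,
    map_smul, ← modeLadder, ← E.ladderVec_eq_ladderProd_erase]

end Diagonal

end HeisenbergH

theorem stmt_8_general (H : Type) [LieRing H] [LieAlgebra ℂ H] (E : HeisenbergH H)
    (V : Type) [AddCommGroup V] [Module ℂ V] [LieRingModule H V] [LieModule ℂ H V]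
    (hirr : ∀ N : LieSubmodule ℂ H V, N = ⊥ ∨ N = ⊤)
    (a : ℂ) (ha : a ≠ 0) (hc : ∀ v : V, ⁅E.c, v⁆ = a • v)
    (hdiag : ∃ v : V, v ≠ 0 ∧ ∀ i : ℤ, i ≠ 0 → ∃ μ : ℂ, ⁅E.e i, ⁅E.e (-i), v⁆⁆ = μ • v) :
    ∃ W : (ℕ+ →₀ ℤ) → Submodule ℂ V,
      iSupIndep W ∧ (⨆ k, W k = ⊤) ∧
      (∀ k : ℕ+ →₀ ℤ, Module.rank ℂ (W k) ≤ 1) ∧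
      (∀ j : ℕ+, ∀ k : ℕ+ →₀ ℤ, ∀ w ∈ W k,
        ⁅E.e (j : ℤ), w⁆ ∈ W (k + Finsupp.single j 1) ∧
        ⁅E.e (-(j : ℤ)), w⁆ ∈ W (k - Finsupp.single j 1)) := by
  obtain ⟨v, hv0, hdiag⟩ := hdiag
  choose μ hμ using fun j : ℕ+ => hdiag j (by positivity)
  have hup j := E.span_ladderVec_le_comap_toEnd_e hc (hμ j)
  have hdown j := E.span_ladderVec_le_comap_toEnd_e_neg hc (hμ j)
  refine ⟨fun k => ℂ ∙ E.ladderVec v k, ?_, ?_, fun k => ?_,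
    fun j k w hw => ⟨hup j k hw, hdown j k hw⟩⟩
  · refine iSupIndep_span_singleton_of_apply_eq_smul E.commute_toEnd_e_mul_toEnd_e_neg
      (χ := fun k j => μ j - k j * a) (fun k k' h => ?_)
      fun k j => E.mul_apply_ladderVec hc (hμ j) k
    ext j
    simpa [ha] using congrFun h j
  · refine Submodule.eq_top_of_le_comap_toEnd hirr E.basis.span_eq ?_
      (Submodule.mem_iSup_of_mem 0 (E.ladderVec_zero v ▸ Submodule.mem_span_singleton_self v)) hv0
    rintro _ ⟨_ | ⟨i, hi⟩, rfl⟩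
    · rw [E.basis_none]
      exact Submodule.iSup_le_comap_iSup fun k =>
        ⟨k, fun w hw => by simpa [hc] using Submodule.smul_mem _ a hw⟩
    · rw [E.basis_some]
      obtain ⟨j, rfl | rfl⟩ := Int.exists_pnat_eq_or_eq_neg hi
      · exact Submodule.iSup_le_comap_iSup fun k => ⟨_, hup j k⟩
      · exact Submodule.iSup_le_comap_iSup fun k => ⟨_, hdown j k⟩
  · exact (rank_span_le _).trans_eq (Cardinal.mk_singleton _)

theorem stmt_8 (H : Type) [LieRing H] [LieAlgebra ℂ H] (E : HeisenbergH H)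
    (V : Type) [AddCommGroup V] [Module ℂ V] [LieRingModule H V] [LieModule ℂ H V]
    (hnt : Nontrivial V)
    (hirr : ∀ N : LieSubmodule ℂ H V, N = ⊥ ∨ N = ⊤)
    (a : ℂ) (ha : a ≠ 0) (hc : ∀ v : V, ⁅E.c, v⁆ = a • v)
    (g : ℤ → Submodule ℂ V) (hg_indep : iSupIndep g) (hg_top : ⨆ n, g n = ⊤)
    (hg_act : ∀ i : ℤ, i ≠ 0 → ∀ n : ℤ, ∀ v ∈ g n, ⁅E.e i, v⁆ ∈ g (i + n))
    (hdiag : ∃ v : V, v ≠ 0 ∧ ∀ i : ℤ, i ≠ 0 → ∃ μ : ℂ, ⁅E.e i, ⁅E.e (-i), v⁆⁆ = μ • v) :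
    ∃ W : (ℕ+ →₀ ℤ) → Submodule ℂ V,
      iSupIndep W ∧ (⨆ k, W k = ⊤) ∧
      (∀ k : ℕ+ →₀ ℤ, Module.rank ℂ (W k) ≤ 1) ∧
      (∀ j : ℕ+, ∀ k : ℕ+ →₀ ℤ, ∀ w ∈ W k,
        ⁅E.e (j : ℤ), w⁆ ∈ W (k + Finsupp.single j 1) ∧
        ⁅E.e (-(j : ℤ)), w⁆ ∈ W (k - Finsupp.single j 1)) :=
  stmt_8_general H E V hirr a ha hc hdiag
end

section
/- Let m be a maximal ideal of D such that t_i ∉ τ(m) for every 1 ≤ i ≤ n and every τ ∈ G (a nondegenerate orbit). Then the left A_n(a)-module A_n(a)/A_n(a)·m is simple. -/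
/-!
STATEMENT 13: if m is a maximal ideal of D = ℂ[t₁,…,tₙ] lying on a nondegenerate orbit of
G (i.e. tᵢ ∉ τ(m) for all i and all τ ∈ G), then A_n(a)/A_n(a)·m is a simple left
A_n(a)-module.  The Weyl algebra A_n(a) is constructed as a quotient of the free algebra
by the defining relations; D is identified with the polynomial algebra MvPolynomial (Fin n) ℂ
mapping tᵢ = Xᵢ to ∂ᵢxᵢ; G is the subgroup of algebra automorphisms of D generated
by the shifts σᵢ : t_j ↦ t_j − δᵢⱼ·a.
-/

/-- Defining relations of the Weyl algebra `A_n(a)`: generators `inl i = xᵢ`, `inr i = ∂ᵢ`,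
relations `xᵢxⱼ = xⱼxᵢ`, `∂ᵢ∂ⱼ = ∂ⱼ∂ᵢ`, `∂ᵢxⱼ = xⱼ∂ᵢ + δᵢⱼ·a`. -/
inductive WeylRel (a : ℂ) (n : ℕ) :
    FreeAlgebra ℂ (Fin n ⊕ Fin n) → FreeAlgebra ℂ (Fin n ⊕ Fin n) → Prop
  | xx (i j : Fin n) : WeylRel a n
      (FreeAlgebra.ι ℂ (Sum.inl i) * FreeAlgebra.ι ℂ (Sum.inl j))
      (FreeAlgebra.ι ℂ (Sum.inl j) * FreeAlgebra.ι ℂ (Sum.inl i))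
  | dd (i j : Fin n) : WeylRel a n
      (FreeAlgebra.ι ℂ (Sum.inr i) * FreeAlgebra.ι ℂ (Sum.inr j))
      (FreeAlgebra.ι ℂ (Sum.inr j) * FreeAlgebra.ι ℂ (Sum.inr i))
  | dx (i j : Fin n) : WeylRel a n
      (FreeAlgebra.ι ℂ (Sum.inr i) * FreeAlgebra.ι ℂ (Sum.inl j))
      (FreeAlgebra.ι ℂ (Sum.inl j) * FreeAlgebra.ι ℂ (Sum.inr i) +
        (if i = j then algebraMap ℂ (FreeAlgebra ℂ (Fin n ⊕ Fin n)) a else 0))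

/-- The Weyl algebra `A_n(a)`. -/
def WeylAlg (a : ℂ) (n : ℕ) : Type := RingQuot (WeylRel a n)

instance (a : ℂ) (n : ℕ) : Ring (WeylAlg a n) :=
  inferInstanceAs (Ring (RingQuot (WeylRel a n)))

instance (a : ℂ) (n : ℕ) : Algebra ℂ (WeylAlg a n) :=
  inferInstanceAs (Algebra ℂ (RingQuot (WeylRel a n)))

/-- The generator `xᵢ` of `A_n(a)`. -/
def wx (a : ℂ) (n : ℕ) (i : Fin n) : WeylAlg a n :=
  RingQuot.mkAlgHom ℂ (WeylRel a n) (FreeAlgebra.ι ℂ (Sum.inl i))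

/-- The generator `∂ᵢ` of `A_n(a)`. -/
def wd (a : ℂ) (n : ℕ) (i : Fin n) : WeylAlg a n :=
  RingQuot.mkAlgHom ℂ (WeylRel a n) (FreeAlgebra.ι ℂ (Sum.inr i))

/-- The element `tᵢ = ∂ᵢxᵢ` of `A_n(a)`. -/
def wt (a : ℂ) (n : ℕ) (i : Fin n) : WeylAlg a n := wd a n i * wx a n i

/-- Evaluation of a polynomial `p ∈ D = ℂ[t₁,…,tₙ]` at the commuting elements
`tᵢ = ∂ᵢxᵢ` of `A_n(a)`; this realizes `D` inside `A_n(a)`. -/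
noncomputable def evalT (a : ℂ) (n : ℕ) (p : MvPolynomial (Fin n) ℂ) : WeylAlg a n :=
  p.support.sum fun mo =>
    MvPolynomial.coeff mo p • (((List.finRange n).map fun i => wt a n i ^ mo i).prod)

/-- The shift `σᵢ` as an algebra endomorphism of `D`: `t_j ↦ t_j − δᵢⱼ·a`. -/
noncomputable def shiftHom (n : ℕ) (a : ℂ) (i : Fin n) :
    MvPolynomial (Fin n) ℂ →ₐ[ℂ] MvPolynomial (Fin n) ℂ :=
  MvPolynomial.aeval (fun j => MvPolynomial.X j - if i = j then MvPolynomial.C a else 0)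

/-- The shift automorphism `σᵢ` of `D`: `t_j ↦ t_j − δᵢⱼ·a`. -/
noncomputable def shiftEquiv (n : ℕ) (a : ℂ) (i : Fin n) :
    MvPolynomial (Fin n) ℂ ≃ₐ[ℂ] MvPolynomial (Fin n) ℂ :=
  AlgEquiv.ofAlgHom (shiftHom n a i) (shiftHom n (-a) i)
    (by
      apply MvPolynomial.algHom_ext
      intro j
      by_cases h : i = j <;>
        simp [shiftHom, h, map_sub, MvPolynomial.aeval_X])
    (by
      apply MvPolynomial.algHom_ext
      intro j
      by_cases h : i = j <;>
        simp [shiftHom, h, map_sub, MvPolynomial.aeval_X])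

/-- The group `G` of automorphisms of `D` generated by the shifts `σ₁,…,σₙ`. -/
noncomputable def shiftGroup (n : ℕ) (a : ℂ) :
    Subgroup (MvPolynomial (Fin n) ℂ ≃ₐ[ℂ] MvPolynomial (Fin n) ℂ) :=
  Subgroup.closure (Set.range (shiftEquiv n a))

/-!
Since `m` is maximal it is the ideal of a point `c ∈ ℂⁿ`, and nondegeneracy of the orbit says
`cᵢ + z a ≠ 0` for all `z ∈ ℤ`. On `P = ⊕_{k ∈ ℤⁿ} ℂ v_k` let `xᵢ` raise `kᵢ` by one and `∂ᵢ`
lower it with coefficient `cᵢ + a (kᵢ - 1)`, so that `tᵢ v_k = (cᵢ + a kᵢ) v_k`. The map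
`r ↦ r v₀` kills `A_n(a)·m`. Every element of `A_n(a)` is a combination of ordered monomials
`W_k = ∏ᵢ xᵢ^{kᵢ} or ∂ᵢ^{-kᵢ}` times elements of `D`, hence congruent modulo `A_n(a)·m` to a
combination of the `W_k`; as `W_k v₀` is a nonzero multiple of `v_k`, the kernel of `r ↦ r v₀` is
exactly `A_n(a)·m`. A nonzero invariant subspace of `P` contains some `v_k`, because the `tᵢ`
separate the weights (`a ≠ 0`), hence also `W_{-k} v_k ∈ ℂ^× v₀`. So a left ideal strictly
containing `A_n(a)·m` contains `1`.
-/

theorem Finsupp.exists_single_one_mem_of_invariant {ι κ K : Type*} [Field K]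
    {V : Submodule K (ι →₀ K)} (T : κ → Module.End K (ι →₀ K)) (μ : κ → ι → K)
    (hT : ∀ i f k, T i f k = μ i k * f k) (hμ : Function.Injective fun k i => μ i k)
    (hV : ∀ i, ∀ f ∈ V, T i f ∈ V) {f : ι →₀ K} (hf : f ∈ V) (hf0 : f ≠ 0) :
    ∃ k, single k 1 ∈ V := by
  classical
  induction hcard : f.support.card using Nat.strong_induction_on generalizing f with
  | _ N ih =>
  obtain ⟨k₀, hk₀⟩ := Finsupp.support_nonempty_iff.2 hf0
  by_cases hsupp : f.support = {k₀}
  · obtain ⟨b, hb, rfl⟩ : ∃ b, b ≠ 0 ∧ f = single k₀ b := ⟨_, Finsupp.support_eq_singleton.1 hsupp⟩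
    exact ⟨k₀, by simpa [smul_single, hb] using V.smul_mem b⁻¹ hf⟩
  obtain ⟨k₁, hk₁, hk₁₀⟩ : ∃ k₁ ∈ f.support, k₁ ≠ k₀ := by
    by_contra! h
    exact hsupp (Finset.eq_singleton_iff_unique_mem.2 ⟨hk₀, h⟩)
  obtain ⟨i, hi⟩ : ∃ i, μ i k₁ ≠ μ i k₀ := Function.ne_iff.1 (hμ.ne hk₁₀)
  -- `T i - μ i k₁` kills the `k₁`-coefficient of `f` but not its `k₀`-coefficient
  obtain ⟨g, hgV, hg⟩ : ∃ g ∈ V, ∀ k, g k = (μ i k - μ i k₁) * f k :=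
    ⟨T i f - μ i k₁ • f, V.sub_mem (hV i f hf) (V.smul_mem _ hf), fun k => by simp [hT, sub_mul]⟩
  have hg_supp : g.support ⊆ f.support.erase k₁ := fun k hk => by
    simp only [Finsupp.mem_support_iff, Finset.mem_erase, hg, ne_eq, mul_eq_zero, not_or] at hk ⊢
    exact ⟨fun h => hk.1 (by rw [h, sub_self]), hk.2⟩
  have hgk₀ : g k₀ ≠ 0 := by
    rw [hg]
    exact mul_ne_zero (sub_ne_zero.2 hi.symm) (Finsupp.mem_support_iff.1 hk₀)
  refine ih g.support.card ?_ hgV (fun h => hgk₀ (by rw [h, Finsupp.zero_apply])) rfl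
  calc g.support.card ≤ (f.support.erase k₁).card := Finset.card_le_card hg_supp
    _ < N := hcard ▸ Finset.card_erase_lt_of_mem hk₁

namespace WeylAlg

variable {a : ℂ} {n : ℕ}

open MvPolynomial Finsupp

theorem wx_commute_wx (i j : Fin n) : Commute (wx a n i) (wx a n j) := by
  have h := RingQuot.mkAlgHom_rel ℂ (WeylRel.xx (a := a) i j)
  rwa [map_mul, map_mul] at h

theorem wd_commute_wd (i j : Fin n) : Commute (wd a n i) (wd a n j) := by
  have h := RingQuot.mkAlgHom_rel ℂ (WeylRel.dd (a := a) i j)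
  rwa [map_mul, map_mul] at h

theorem wd_mul_wx (i j : Fin n) :
    wd a n i * wx a n j = wx a n j * wd a n i + if i = j then a • 1 else 0 := by
  have h := RingQuot.mkAlgHom_rel ℂ (WeylRel.dx (a := a) (n := n) i j)
  rw [map_mul, map_add, map_mul, apply_ite (RingQuot.mkAlgHom ℂ (WeylRel a n)), map_zero,
    AlgHom.commutes, Algebra.algebraMap_eq_smul_one] at h
  exact h

theorem wd_commute_wx {i j : Fin n} (h : i ≠ j) : Commute (wd a n i) (wx a n j) := by
  have hdx := wd_mul_wx (a := a) i j
  rwa [if_neg h, add_zero] at hdx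

theorem wt_commute_wt (i j : Fin n) : Commute (wt a n i) (wt a n j) := by
  rcases eq_or_ne i j with rfl | h
  · exact Commute.refl _
  · exact ((wd_commute_wd i j).mul_left (wd_commute_wx (Ne.symm h)).symm).mul_right
      ((wd_commute_wx h).mul_left (wx_commute_wx i j))

theorem wt_mul_wx (i : Fin n) : wt a n i * wx a n i = wx a n i * wt a n i + a • wx a n i := by
  simp only [wt, wd_mul_wx, if_pos, add_mul, mul_assoc, smul_mul_assoc, one_mul]

theorem wt_mul_wd (i : Fin n) : wt a n i * wd a n i = wd a n i * wt a n i - a • wd a n i := by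
  have h : wx a n i * wd a n i = wt a n i - a • 1 := by
    rw [wt, wd_mul_wx, if_pos rfl, add_sub_cancel_right]
  rw [wt, mul_assoc, ← wt, h, mul_sub, mul_smul_comm, mul_one]

theorem wd_mul_wx_pow_succ (i : Fin n) (p : ℕ) :
    wd a n i * wx a n i ^ (p + 1) = wx a n i ^ p * (wt a n i + ((p : ℂ) * a) • 1) := by
  induction p with
  | zero => simp [wt]
  | succ p ih =>
    rw [pow_succ, ← mul_assoc, ih, mul_assoc, add_mul, wt_mul_wx, pow_succ, mul_assoc]
    simp only [smul_mul_assoc, one_mul, mul_add, mul_smul_comm, mul_one, add_assoc, ← add_smul]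
    push_cast
    ring_nf

theorem wx_mul_wd_pow_succ (i : Fin n) (p : ℕ) :
    wx a n i * wd a n i ^ (p + 1) = wd a n i ^ p * (wt a n i - (((p : ℂ) + 1) * a) • 1) := by
  induction p with
  | zero =>
    simp only [zero_add, pow_one, pow_zero, one_mul, Nat.cast_zero, wt, wd_mul_wx, if_pos]
    abel
  | succ p ih =>
    rw [pow_succ, ← mul_assoc, ih, mul_assoc, sub_mul, wt_mul_wd, pow_succ, mul_assoc]
    simp only [smul_mul_assoc, one_mul, mul_sub, mul_smul_comm, mul_one, sub_sub, ← add_smul]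
    push_cast
    ring_nf

theorem submodule_eq_top_of_mul_mem {S : Submodule ℂ (WeylAlg a n)} (one_mem : 1 ∈ S)
    (wx_mul_mem : ∀ i, ∀ s ∈ S, wx a n i * s ∈ S) (wd_mul_mem : ∀ i, ∀ s ∈ S, wd a n i * s ∈ S) :
    S = ⊤ := by
  let π : FreeAlgebra ℂ (Fin n ⊕ Fin n) →ₐ[ℂ] WeylAlg a n := RingQuot.mkAlgHom ℂ (WeylRel a n)
  suffices h : ∀ y, ∀ s ∈ S, π y * s ∈ S by
    refine eq_top_iff.2 fun r _ => ?_
    obtain ⟨y, rfl⟩ : ∃ y, π y = r := RingQuot.mkAlgHom_surjective ℂ (WeylRel a n) r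
    simpa using h y 1 one_mem
  intro y
  induction y using FreeAlgebra.induction with
  | grade0 b => simpa [Algebra.algebraMap_eq_smul_one] using fun s hs => S.smul_mem b hs
  | grade1 v => rcases v with i | i; exacts [wx_mul_mem i, wd_mul_mem i]
  | mul y z hy hz => exact fun s hs => by simpa [mul_assoc] using hy _ (hz s hs)
  | add y z hy hz => exact fun s hs => by simpa [add_mul] using S.add_mem (hy s hs) (hz s hs)

open scoped IsMulCommutative in
/-- `evalT` as an algebra map, through the commutative subalgebra generated by the `tᵢ`. -/
noncomputable def evalTAlgHom (a : ℂ) (n : ℕ) : MvPolynomial (Fin n) ℂ →ₐ[ℂ] WeylAlg a n :=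
  haveI := Algebra.isMulCommutative_adjoin ℂ (s := Set.range (wt a n))
    (by rintro _ ⟨i, rfl⟩ _ ⟨j, rfl⟩; exact wt_commute_wt i j)
  (Algebra.adjoin ℂ (Set.range (wt a n))).val.comp
    (aeval fun i => ⟨wt a n i, Algebra.subset_adjoin ⟨i, rfl⟩⟩)

@[simp]
theorem evalTAlgHom_X (i : Fin n) : evalTAlgHom a n (X i) = wt a n i := by
  simp [evalTAlgHom]

theorem evalTAlgHom_apply (p : MvPolynomial (Fin n) ℂ) : evalTAlgHom a n p = evalT a n p := by
  conv_lhs => rw [p.as_sum, map_sum]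
  refine Finset.sum_congr rfl fun mo _ => ?_
  rw [monomial_eq, map_mul, Finsupp.prod_pow, Fin.prod_univ_def, map_list_prod, List.map_map,
    ← algebraMap_eq, AlgHom.commutes, ← Algebra.smul_def]
  simp [Function.comp_def]

def wpow (a : ℂ) (n : ℕ) (i : Fin n) : ℤ → WeylAlg a n
  | .ofNat p => wx a n i ^ p
  | .negSucc p => wd a n i ^ (p + 1)

@[simp]
theorem wpow_zero (i : Fin n) : wpow a n i 0 = 1 := pow_zero _

theorem wpow_natCast (i : Fin n) (p : ℕ) : wpow a n i p = wx a n i ^ p := rfl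

theorem wpow_neg_natCast (i : Fin n) (p : ℕ) : wpow a n i (-p) = wd a n i ^ p := by
  cases p with
  | zero => rw [Nat.cast_zero, neg_zero, pow_zero, wpow_zero]
  | succ p => rw [Int.neg_ofNat_succ]; rfl

theorem wx_commute_wpow {i j : Fin n} (h : i ≠ j) (z : ℤ) : Commute (wx a n i) (wpow a n j z) := by
  cases z
  · exact (wx_commute_wx i j).pow_right _
  · exact (wd_commute_wx (Ne.symm h)).symm.pow_right _

theorem wd_commute_wpow {i j : Fin n} (h : i ≠ j) (z : ℤ) : Commute (wd a n i) (wpow a n j z) := by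
  cases z
  · exact (wd_commute_wx h).pow_right _
  · exact (wd_commute_wd i j).pow_right _

theorem wpow_commute_wpow {i j : Fin n} (h : i ≠ j) (z z' : ℤ) :
    Commute (wpow a n i z) (wpow a n j z') := by
  cases z
  · exact (wx_commute_wpow h z').pow_left _
  · exact (wd_commute_wpow h z').pow_left _

theorem evalTAlgHom_X_add_C (i : Fin n) (b : ℂ) :
    evalTAlgHom a n (X i + C b) = wt a n i + b • 1 := by
  rw [map_add, evalTAlgHom_X, ← algebraMap_eq, AlgHom.commutes, Algebra.algebraMap_eq_smul_one]

theorem wx_mul_wpow (i : Fin n) (z : ℤ) :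
    ∃ q, wx a n i * wpow a n i z = wpow a n i (z + 1) * evalTAlgHom a n q := by
  rcases z with p | p
  · refine ⟨1, ?_⟩
    rw [map_one, mul_one, Int.ofNat_eq_natCast, ← Nat.cast_succ, wpow_natCast, wpow_natCast,
      pow_succ']
  · refine ⟨X i + C (-(((p : ℂ) + 1) * a)), ?_⟩
    rw [evalTAlgHom_X_add_C, neg_smul, ← sub_eq_add_neg, wpow, wx_mul_wd_pow_succ,
      show Int.negSucc p + 1 = -(p : ℤ) by omega, wpow_neg_natCast]

theorem wd_mul_wpow (i : Fin n) (z : ℤ) :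
    ∃ q, wd a n i * wpow a n i z = wpow a n i (z - 1) * evalTAlgHom a n q := by
  rcases z with (_ | p) | p
  · refine ⟨1, ?_⟩
    rw [map_one, mul_one, show Int.ofNat 0 - 1 = Int.negSucc 0 by simp, wpow, wpow, pow_zero,
      mul_one, zero_add, pow_one]
  · refine ⟨X i + C ((p : ℂ) * a), ?_⟩
    rw [evalTAlgHom_X_add_C, wpow, wd_mul_wx_pow_succ,
      show Int.ofNat (p + 1) - 1 = p by simp, wpow_natCast]
  · refine ⟨1, ?_⟩
    rw [map_one, mul_one, show Int.negSucc p - 1 = Int.negSucc (p + 1) by omega, wpow, wpow,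
      ← pow_succ']

noncomputable def stdMonomial (a : ℂ) (n : ℕ) (k : Fin n → ℤ) : WeylAlg a n :=
  Finset.univ.noncommProd (fun i => wpow a n i (k i)) fun _ _ _ _ h => wpow_commute_wpow h _ _

@[simp]
theorem stdMonomial_zero : stdMonomial a n 0 = 1 :=
  (Finset.noncommProd_eq_pow_card _ _ _ 1 fun _ _ => wpow_zero _).trans (one_pow _)

theorem stdMonomial_eq_noncommProd_erase_mul (k : Fin n → ℤ) (i : Fin n) :
    stdMonomial a n k = (Finset.univ.erase i).noncommProd (fun j => wpow a n j (k j))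
      (fun _ _ _ _ h => wpow_commute_wpow h _ _) * wpow a n i (k i) :=
  (Finset.noncommProd_erase_mul _ (Finset.mem_univ i) _ _).symm

theorem mul_stdMonomial_of_commute {u v : WeylAlg a n} {i : Fin n} {z : ℤ} (k : Fin n → ℤ)
    (hu : ∀ j ≠ i, Commute u (wpow a n j (k j))) (h : u * wpow a n i (k i) = wpow a n i z * v) :
    u * stdMonomial a n k = stdMonomial a n (Function.update k i z) * v := by
  have hcomm := (Finset.univ.erase i).noncommProd_commute (fun j => wpow a n j (k j))
    (fun _ _ _ _ h => wpow_commute_wpow h _ _) u fun j hj => hu j (Finset.ne_of_mem_erase hj)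
  rw [stdMonomial_eq_noncommProd_erase_mul k i, stdMonomial_eq_noncommProd_erase_mul _ i,
    ← mul_assoc, hcomm.eq, mul_assoc, h, Function.update_self, ← mul_assoc]
  congr 2
  exact Finset.noncommProd_congr rfl
    (fun j hj => by rw [Function.update_of_ne (Finset.ne_of_mem_erase hj)]) _

theorem wx_mul_stdMonomial (i : Fin n) (k : Fin n → ℤ) : ∃ q, wx a n i * stdMonomial a n k =
    stdMonomial a n (Function.update k i (k i + 1)) * evalTAlgHom a n q := by
  obtain ⟨q, hq⟩ := wx_mul_wpow (a := a) i (k i)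
  exact ⟨q, mul_stdMonomial_of_commute k (fun j hj => wx_commute_wpow hj.symm _) hq⟩

theorem wd_mul_stdMonomial (i : Fin n) (k : Fin n → ℤ) : ∃ q, wd a n i * stdMonomial a n k =
    stdMonomial a n (Function.update k i (k i - 1)) * evalTAlgHom a n q := by
  obtain ⟨q, hq⟩ := wd_mul_wpow (a := a) i (k i)
  exact ⟨q, mul_stdMonomial_of_commute k (fun j hj => wd_commute_wpow hj.symm _) hq⟩

theorem span_stdMonomial_mul_evalTAlgHom :
    Submodule.span ℂ {r | ∃ k q, stdMonomial a n k * evalTAlgHom a n q = r} = ⊤ := by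
  set S := Submodule.span ℂ {r | ∃ k q, stdMonomial a n k * evalTAlgHom a n q = r}
  have mul_mem : ∀ u : WeylAlg a n,
      (∀ k, ∃ k' q, u * stdMonomial a n k = stdMonomial a n k' * evalTAlgHom a n q) →
        ∀ s ∈ S, u * s ∈ S := by
    intro u hu s hs
    induction hs using Submodule.span_induction with
    | mem s hs =>
      obtain ⟨k, q, rfl⟩ := hs
      obtain ⟨k', q', hk'⟩ := hu k
      exact Submodule.subset_span ⟨k', q' * q, by rw [← mul_assoc, hk', mul_assoc, map_mul]⟩
    | zero => simp
    | add s t _ _ hs ht => simpa [mul_add] using S.add_mem hs ht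
    | smul b s _ hs => simpa [mul_smul_comm] using S.smul_mem b hs
  refine submodule_eq_top_of_mul_mem (Submodule.subset_span ⟨0, 1, by simp⟩)
    (fun i => mul_mem _ fun k => ?_) (fun i => mul_mem _ fun k => ?_)
  · exact ⟨_, wx_mul_stdMonomial i k⟩
  · exact ⟨_, wd_mul_stdMonomial i k⟩

noncomputable def raiseOp (n : ℕ) (i : Fin n) : Module.End ℂ ((Fin n → ℤ) →₀ ℂ) :=
  lmapDomain ℂ ℂ (· + Pi.single i 1)

noncomputable def lowerOp (a : ℂ) (c : Fin n → ℂ) (i : Fin n) :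
    Module.End ℂ ((Fin n → ℤ) →₀ ℂ) :=
  lsum ℂ fun k => (c i + a * ((k i : ℂ) - 1)) • lsingle (k - Pi.single i 1)

@[simp]
theorem raiseOp_single (i : Fin n) (k : Fin n → ℤ) (μ : ℂ) :
    raiseOp n i (single k μ) = single (k + Pi.single i 1) μ := by
  simp [raiseOp]

@[simp]
theorem lowerOp_single (c : Fin n → ℂ) (i : Fin n) (k : Fin n → ℤ) (μ : ℂ) :
    lowerOp a c i (single k μ) = (c i + a * ((k i : ℂ) - 1)) • single (k - Pi.single i 1) μ := by
  simp [lowerOp]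

noncomputable def weightRep (a : ℂ) (c : Fin n → ℂ) :
    WeylAlg a n →ₐ[ℂ] Module.End ℂ ((Fin n → ℤ) →₀ ℂ) :=
  RingQuot.liftAlgHom ℂ ⟨FreeAlgebra.lift ℂ (Sum.elim (raiseOp n) (lowerOp a c)), by
    intro x y h
    cases h with
    | xx i j =>
      refine lhom_ext fun k μ => ?_
      simp [add_right_comm]
    | dd i j =>
      refine lhom_ext fun k μ => ?_
      rcases eq_or_ne i j with rfl | hij
      · rfl
      · simp only [map_mul, FreeAlgebra.lift_ι_apply, Sum.elim_inr, Module.End.mul_apply,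
          lowerOp_single, map_smul, smul_smul, Pi.sub_apply, Pi.single_eq_of_ne hij,
          Pi.single_eq_of_ne hij.symm, sub_zero, sub_right_comm k]
        ring_nf
    | dx i j =>
      refine lhom_ext fun k μ => ?_
      simp only [map_mul, map_add, FreeAlgebra.lift_ι_apply, Sum.elim_inr, Sum.elim_inl,
        Module.End.mul_apply, lowerOp_single, raiseOp_single, map_smul, LinearMap.add_apply]
      rcases eq_or_ne i j with rfl | hij
      · simp only [if_pos, AlgHom.commutes, Module.algebraMap_end_apply, add_sub_cancel_right,
          Pi.add_apply, Pi.single_eq_same, Int.cast_add, Int.cast_one, sub_add_cancel]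
        rw [← add_smul]
        ring_nf
      · simp only [if_neg hij, map_zero, LinearMap.zero_apply, add_zero, Pi.add_apply,
          Pi.single_eq_of_ne hij, add_zero, sub_add_eq_add_sub]⟩

section

variable {c : Fin n → ℂ}

theorem weightRep_wx (i : Fin n) : weightRep a c (wx a n i) = raiseOp n i :=
  (RingQuot.liftAlgHom_mkAlgHom_apply ℂ _ _ _).trans (FreeAlgebra.lift_ι_apply _ _)

theorem weightRep_wd (i : Fin n) : weightRep a c (wd a n i) = lowerOp a c i :=
  (RingQuot.liftAlgHom_mkAlgHom_apply ℂ _ _ _).trans (FreeAlgebra.lift_ι_apply _ _)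

theorem weightRep_wt_single (i : Fin n) (k : Fin n → ℤ) (μ : ℂ) :
    weightRep a c (wt a n i) (single k μ) = (c i + a * k i) • single k μ := by
  simp only [wt, map_mul, Module.End.mul_apply, weightRep_wx, weightRep_wd, raiseOp_single,
    lowerOp_single, add_sub_cancel_right, Pi.add_apply, Pi.single_eq_same, Int.cast_add,
    Int.cast_one]

theorem weightRep_wt_apply (i : Fin n) (f : (Fin n → ℤ) →₀ ℂ) (k : Fin n → ℤ) :
    weightRep a c (wt a n i) f k = (c i + a * k i) * f k := by
  induction f using Finsupp.induction_linear with
  | zero => simp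
  | add f g hf hg => simp [hf, hg, mul_add]
  | single k' μ =>
    rw [weightRep_wt_single]
    rcases eq_or_ne k' k with rfl | hne
    · simp
    · simp [single_eq_of_ne' hne]

theorem weightRep_evalTAlgHom_single (p : MvPolynomial (Fin n) ℂ) (k : Fin n → ℤ) (μ : ℂ) :
    weightRep a c (evalTAlgHom a n p) (single k μ)
      = eval (fun i => c i + a * k i) p • single k μ := by
  induction p using MvPolynomial.induction_on with
  | C b => simp [← algebraMap_eq, Module.algebraMap_end_apply]
  | add p q hp hq => simp only [map_add, LinearMap.add_apply, hp, hq, add_smul]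
  | mul_X p i hp =>
    rw [map_mul, map_mul, Module.End.mul_apply, evalTAlgHom_X, weightRep_wt_single, map_smul, hp,
      smul_smul, eval_mul, eval_X, mul_comm]

noncomputable def vacuumMap (a : ℂ) (c : Fin n → ℂ) : WeylAlg a n →ₗ[ℂ] (Fin n → ℤ) →₀ ℂ :=
  LinearMap.applyₗ (single 0 1) ∘ₗ (weightRep a c).toLinearMap

theorem vacuumMap_apply (r : WeylAlg a n) : vacuumMap a c r = weightRep a c r (single 0 1) := rfl

theorem vacuumMap_mul (s r : WeylAlg a n) :
    vacuumMap a c (s * r) = weightRep a c s (vacuumMap a c r) := by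
  rw [vacuumMap_apply, map_mul, Module.End.mul_apply, vacuumMap_apply]

noncomputable def pointIdeal (a : ℂ) (c : Fin n → ℂ) : Submodule (WeylAlg a n) (WeylAlg a n) :=
  Submodule.span (WeylAlg a n) (evalT a n '' (vanishingIdeal ℂ {c} : Set (MvPolynomial (Fin n) ℂ)))

theorem vacuumMap_eq_zero_of_mem {r : WeylAlg a n} (hr : r ∈ pointIdeal a c) :
    vacuumMap a c r = 0 := by
  induction hr using Submodule.span_induction with
  | mem r hr =>
    obtain ⟨p, hp, rfl⟩ := hr
    rw [SetLike.mem_coe, mem_vanishingIdeal_singleton_iff] at hp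
    simp [vacuumMap_apply, ← evalTAlgHom_apply, weightRep_evalTAlgHom_single, ← coe_aeval_eq_eval,
      hp]
  | zero => exact map_zero _
  | add x y _ _ hx hy => rw [map_add, hx, hy, add_zero]
  | smul s r _ hr => rw [smul_eq_mul, vacuumMap_mul, hr, map_zero]

theorem restrictScalars_pointIdeal_sup_span_stdMonomial :
    (pointIdeal a c).restrictScalars ℂ ⊔ Submodule.span ℂ (Set.range (stdMonomial a n)) = ⊤ := by
  refine eq_top_iff.2 (span_stdMonomial_mul_evalTAlgHom (a := a) ▸ Submodule.span_le.2 ?_)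
  rintro _ ⟨k, q, rfl⟩
  have hq : q - C (eval c q) ∈ vanishingIdeal ℂ {c} := by simp
  have hsplit : evalTAlgHom a n q = evalTAlgHom a n (q - C (eval c q)) + eval c q • 1 := by
    rw [map_sub, ← algebraMap_eq, AlgHom.commutes, Algebra.algebraMap_eq_smul_one, sub_add_cancel]
  rw [hsplit, mul_add, mul_smul_comm, mul_one]
  refine Submodule.add_mem_sup ?_ (Submodule.smul_mem _ _ (Submodule.subset_span ⟨k, rfl⟩))
  exact (pointIdeal a c).smul_mem _
    (Submodule.subset_span ⟨_, hq, (evalTAlgHom_apply _).symm⟩)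

variable (hc : ∀ i (z : ℤ), c i + a * z ≠ 0)
include hc

theorem weightRep_wd_pow_single (i : Fin n) (p : ℕ) (k : Fin n → ℤ) {μ : ℂ} (hμ : μ ≠ 0) :
    ∃ ν ≠ 0, weightRep a c (wd a n i ^ p) (single k μ) = single (k - Pi.single i (p : ℤ)) ν := by
  induction p with
  | zero => exact ⟨μ, hμ, by simp⟩
  | succ p ih =>
    obtain ⟨ν, hν, h⟩ := ih
    refine ⟨(c i + a * ((k i - p - 1 : ℤ) : ℂ)) * ν, mul_ne_zero (hc _ _) hν, ?_⟩
    rw [pow_succ', map_mul, Module.End.mul_apply, h, weightRep_wd, lowerOp_single, smul_single,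
      smul_eq_mul, sub_sub, ← Pi.single_add, Nat.cast_succ]
    simp

theorem weightRep_wpow_single (i : Fin n) (z : ℤ) (k : Fin n → ℤ) {μ : ℂ} (hμ : μ ≠ 0) :
    ∃ ν ≠ 0, weightRep a c (wpow a n i z) (single k μ) = single (k + Pi.single i z) ν := by
  rcases z with p | p
  · refine ⟨μ, hμ, ?_⟩
    induction p with
    | zero => simp [wpow]
    | succ p ih =>
      rw [Int.ofNat_eq_natCast] at ih ⊢
      rw [wpow_natCast, pow_succ', map_mul, Module.End.mul_apply, ← wpow_natCast, ih, weightRep_wx,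
        raiseOp_single, add_assoc, ← Pi.single_add, Nat.cast_succ]
  · obtain ⟨ν, hν, h⟩ := weightRep_wd_pow_single hc i (p + 1) k hμ
    refine ⟨ν, hν, ?_⟩
    rw [wpow, h, Int.negSucc_eq, Pi.single_neg, ← sub_eq_add_neg]
    push_cast
    rfl

theorem weightRep_stdMonomial_single (k l : Fin n → ℤ) {μ : ℂ} (hμ : μ ≠ 0) :
    ∃ ν ≠ 0, weightRep a c (stdMonomial a n k) (single l μ) = single (l + k) ν := by
  classical
  suffices key : ∀ (s : Finset (Fin n)) (comm) (l : Fin n → ℤ) (μ : ℂ), μ ≠ 0 →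
      ∃ ν ≠ 0, weightRep a c (s.noncommProd (fun j => wpow a n j (k j)) comm) (single l μ) =
        single (l + ∑ j ∈ s, Pi.single j (k j)) ν by
    have := key Finset.univ (fun _ _ _ _ h => wpow_commute_wpow h _ _) l μ hμ
    rwa [Finset.univ_sum_single] at this
  intro s
  induction s using Finset.induction_on with
  | empty => exact fun _ l μ hμ => ⟨μ, hμ, by simp⟩
  | insert j s hj ih =>
    intro comm l μ hμ
    obtain ⟨ν, hν, h⟩ := ih (comm.mono (Finset.subset_insert j s)) l μ hμ
    obtain ⟨ν', hν', h'⟩ := weightRep_wpow_single hc j (k j) _ hν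
    refine ⟨ν', hν', ?_⟩
    rw [Finset.noncommProd_insert_of_notMem _ _ _ _ hj, map_mul, Module.End.mul_apply, h, h',
      Finset.sum_insert hj, add_assoc, add_comm (∑ x ∈ s, _)]

theorem linearIndependent_vacuumMap_stdMonomial :
    LinearIndependent ℂ (vacuumMap a c ∘ stdMonomial a n) := by
  choose ν hν hW using fun k => weightRep_stdMonomial_single hc k 0 one_ne_zero
  simp only [zero_add] at hW
  rw [show vacuumMap a c ∘ stdMonomial a n = fun k => single k (ν k) from funext hW]
  exact linearIndependent_single_of_ne_zero hν

theorem ker_vacuumMap : LinearMap.ker (vacuumMap a c) = (pointIdeal a c).restrictScalars ℂ := by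
  refine le_antisymm (fun r hr => ?_) fun r hr => vacuumMap_eq_zero_of_mem hr
  obtain ⟨u, hu, w, hw, rfl⟩ :=
    Submodule.mem_sup.1 (restrictScalars_pointIdeal_sup_span_stdMonomial (a := a) (c := c) ▸
      Submodule.mem_top (x := r))
  have hw0 : w ∈ LinearMap.ker (vacuumMap a c) := by
    rw [LinearMap.mem_ker, map_add, vacuumMap_eq_zero_of_mem hu, zero_add] at hr
    exact hr
  rw [Submodule.disjoint_def.1 (Submodule.range_ker_disjoint
    (linearIndependent_vacuumMap_stdMonomial hc)) w hw hw0, add_zero]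
  exact hu

theorem single_zero_mem_of_invariant (ha : a ≠ 0) {V : Submodule ℂ ((Fin n → ℤ) →₀ ℂ)}
    (hV : ∀ r, ∀ f ∈ V, weightRep a c r f ∈ V) (hV0 : V ≠ ⊥) : single 0 1 ∈ V := by
  obtain ⟨f, hf, hf0⟩ := Submodule.exists_mem_ne_zero_of_ne_bot hV0
  have hμ : Function.Injective fun (k : Fin n → ℤ) i => c i + a * k i := fun k k' h =>
    funext fun i => by simpa [ha] using congr_fun h i
  obtain ⟨k, hk⟩ := Finsupp.exists_single_one_mem_of_invariant (fun i => weightRep a c (wt a n i))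
    _ (fun i => weightRep_wt_apply i) hμ (fun i => hV _) hf hf0
  obtain ⟨ν, hν, h⟩ := weightRep_stdMonomial_single hc (-k) k one_ne_zero
  rw [add_neg_cancel] at h
  simpa [h, smul_single, hν] using V.smul_mem ν⁻¹ (hV (stdMonomial a n (-k)) _ hk)

theorem isCoatom_pointIdeal (ha : a ≠ 0) : IsCoatom (pointIdeal a c) := by
  have hker := ker_vacuumMap hc
  refine ⟨fun htop => ?_, fun J hJ => ?_⟩
  · have h1 := vacuumMap_eq_zero_of_mem (c := c) (htop ▸ Submodule.mem_top : (1 : WeylAlg a n) ∈ _)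
    simp [vacuumMap_apply] at h1
  obtain ⟨r, hrJ, hrI⟩ := SetLike.exists_of_lt hJ
  set V := (J.restrictScalars ℂ).map (vacuumMap a c)
  have hV : ∀ s, ∀ f ∈ V, weightRep a c s f ∈ V := by
    rintro s _ ⟨u, hu, rfl⟩
    exact ⟨s * u, J.smul_mem s hu, vacuumMap_mul s u⟩
  have hV0 : V ≠ ⊥ := fun h => hrI <| (Submodule.restrictScalars_mem ℂ _ _).1 <|
    hker ▸ LinearMap.mem_ker.2 ((Submodule.eq_bot_iff _).1 h _ ⟨r, hrJ, rfl⟩)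
  obtain ⟨u, hu, hvu⟩ := single_zero_mem_of_invariant hc ha hV hV0
  have h1u : 1 - u ∈ J := hJ.le <| by
    rw [← Submodule.restrictScalars_mem ℂ, ← hker, LinearMap.mem_ker, map_sub, hvu,
      vacuumMap_apply, map_one, Module.End.one_apply, sub_self]
  exact (Ideal.eq_top_iff_one J).2 (by simpa using J.add_mem h1u hu)

end

end WeylAlg

section

open MvPolynomial

theorem shiftEquiv_X_sub_C (n : ℕ) (a : ℂ) (i : Fin n) (b : ℂ) :
    shiftEquiv n a i (X i - C b) = X i - C (b + a) := by
  change shiftHom n a i (X i - C b) = _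
  simp [shiftHom, sub_sub, add_comm]

theorem shiftEquiv_zpow_X_sub_C (n : ℕ) (a : ℂ) (i : Fin n) (z : ℤ) (b : ℂ) :
    (shiftEquiv n a i ^ z) (X i - C b) = X i - C (b + z * a) := by
  induction z using Int.induction_on generalizing b with
  | zero => simp
  | succ z ih =>
    rw [zpow_add_one, AlgEquiv.mul_apply, shiftEquiv_X_sub_C, ih]
    push_cast
    ring_nf
  | pred z ih =>
    have hinv : (shiftEquiv n a i)⁻¹ (X i - C b) = X i - C (b - a) := by
      rw [AlgEquiv.aut_inv, AlgEquiv.symm_apply_eq, shiftEquiv_X_sub_C, sub_add_cancel]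
    rw [zpow_sub_one, AlgEquiv.mul_apply, hinv, ih]
    push_cast
    ring_nf

theorem add_mul_intCast_ne_zero_of_nondegenerate {a : ℂ} {n : ℕ} {c : Fin n → ℂ}
    (hnd : ∀ τ ∈ shiftGroup n a, ∀ i : Fin n,
      X i ∉ (vanishingIdeal ℂ {c}).map τ.toAlgHom)
    (i : Fin n) (z : ℤ) : c i + a * z ≠ 0 := by
  intro h
  refine hnd _ (zpow_mem (Subgroup.subset_closure (Set.mem_range_self i)) z) i ?_
  have hmem : X i - C (c i) ∈ vanishingIdeal ℂ {c} := by simp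
  convert Ideal.mem_map_of_mem (shiftEquiv n a i ^ z).toAlgHom hmem
  rw [AlgEquiv.toAlgHom_apply, shiftEquiv_zpow_X_sub_C, mul_comm, h, C_0, sub_zero]

end

theorem stmt_13 (a : ℂ) (ha : a ≠ 0) (n : ℕ)
    (m : Ideal (MvPolynomial (Fin n) ℂ)) (hm : m.IsMaximal)
    (hnd : ∀ τ ∈ shiftGroup n a, ∀ i : Fin n,
      MvPolynomial.X i ∉ m.map (τ : MvPolynomial (Fin n) ℂ ≃ₐ[ℂ] MvPolynomial (Fin n) ℂ).toAlgHom) :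
    IsSimpleModule (WeylAlg a n)
      (WeylAlg a n ⧸ Submodule.span (WeylAlg a n)
        (evalT a n '' (m : Set (MvPolynomial (Fin n) ℂ)))) := by
  obtain ⟨c, rfl⟩ := MvPolynomial.isMaximal_iff_eq_vanishingIdeal_singleton.1 hm
  exact isSimpleModule_iff_isCoatom.2
    (WeylAlg.isCoatom_pointIdeal (add_mul_intCast_ne_zero_of_nondegenerate hnd) ha)
end
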